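/- arXiv:math/0210045 — 6 statements merged into one kernel-verified Lean document; each statement's English description precedes it below -/
import Mathlib

section
/- The 'sparse' simplicial complex on vertex set {1,...,m} (simplices are subsets containing no two consecutive integers), for m = 2n, is homotopy equivalent to S^{2k−1} if n = 3k, to S^{2k} if n = 3k+1, and is contractible if n = 3k+2. -/
/-- A face of the sparse complex on `{1,...,m}`: a subset with no two consecutive integers. -/
def SparseFace (m : ℕ) (σ : Finset ℕ) : Prop :=
  σ ⊆ Finset.Icc 1 m ∧ ∀ i : ℕ, ¬(i ∈ σ ∧ i + 1 ∈ σ)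

/-- The geometric realization of an abstract simplicial complex given by its set of
faces `K`: nonnegative weight functions whose support is contained in a face and whose
total weight is 1. -/
def geomReal {α : Type*} [DecidableEq α] (K : Set (Finset α)) : Set (α → ℝ) :=
  {w | (∀ i, 0 ≤ w i) ∧ ∃ σ ∈ K, (∀ i, w i ≠ 0 → i ∈ σ) ∧ ∑ i ∈ σ, w i = 1}

/-- The subspace of the realization of the sparse complex on `{1,...,m}` where the
weights of `3, 6, ..., 3K` vanish. -/
def SpSet (m K : ℕ) : Set (ℕ → ℝ) :=
  {w | (∀ i, 0 ≤ w i) ∧ (∀ i, w i ≠ 0 → i ∈ Finset.Icc 1 m) ∧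
    (∀ i, ¬(w i ≠ 0 ∧ w (i+1) ≠ 0)) ∧ (∑ i ∈ Finset.Icc 1 m, w i = 1) ∧
    (∀ i, 1 ≤ i → i ≤ K → w (3*i) = 0)}

lemma geomReal_eq (m : ℕ) : geomReal {σ | SparseFace m σ} = SpSet m 0 := by
  classical
  ext w
  constructor
  · rintro ⟨h0, σ, ⟨hsub, hsp⟩, hsupp, hsum⟩
    refine ⟨h0, fun i hi => hsub (hsupp i hi), fun i ⟨hi, hi1⟩ => hsp i ⟨hsupp i hi, hsupp _ hi1⟩,
      ?_, fun i h1 h0' => by omega⟩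
    rw [← Finset.sum_subset hsub (fun x _ hx => by
      by_contra hc; exact hx (hsupp x hc))]
    exact hsum
  · rintro ⟨h0, hIcc, hsp, hsum, -⟩
    refine ⟨h0, (Finset.Icc 1 m).filter (fun i => w i ≠ 0), ⟨Finset.filter_subset _ _,
      fun i ⟨hi, hi1⟩ => ?_⟩, fun i hi => Finset.mem_filter.2 ⟨hIcc i hi, hi⟩, ?_⟩
    · exact hsp i ⟨(Finset.mem_filter.1 hi).2, (Finset.mem_filter.1 hi1).2⟩
    · rw [Finset.sum_subset (Finset.filter_subset _ _) (fun x hx hx' => by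
        by_contra hc; exact hx' (Finset.mem_filter.2 ⟨hx, hc⟩))]
      exact hsum

lemma sum_triples (w : ℕ → ℝ) (p : ℕ) :
    ∑ i ∈ Finset.Icc 1 (3*p), w i
      = ∑ q ∈ Finset.range p, (w (3*q+1) + w (3*q+2) + w (3*q+3)) := by
  induction p with
  | zero => simp
  | succ p ih =>
    have h3 : ∀ a : ℕ, ∑ i ∈ Finset.Icc 1 (a+3), w i
        = ∑ i ∈ Finset.Icc 1 a, w i + (w (a+1) + w (a+2) + w (a+3)) := by
      intro a
      rw [show a+3 = (a+1+1)+1 by ring, Finset.sum_Icc_succ_top (by omega),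
        Finset.sum_Icc_succ_top (by omega), Finset.sum_Icc_succ_top (by omega),
        show a+1+1 = a+2 by ring, show a+1+1+1 = a+3 by ring]
      ring
    rw [show 3*(p+1) = 3*p+3 by ring, h3, Finset.sum_range_succ, ih]

lemma sum_pairs (m p : ℕ) (w : ℕ → ℝ) (hmp : m ≤ 3*p)
    (hz : ∀ q, w (3*q+3) = 0) (hout : ∀ i, w i ≠ 0 → i ∈ Finset.Icc 1 m) :
    ∑ i ∈ Finset.Icc 1 m, w i = ∑ q ∈ Finset.range p, (w (3*q+1) + w (3*q+2)) := by
  have h1 : ∑ i ∈ Finset.Icc 1 m, w i = ∑ i ∈ Finset.Icc 1 (3*p), w i := by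
    refine Finset.sum_subset (Finset.Icc_subset_Icc_right hmp) (fun x _ hx => ?_)
    by_contra hc; exact hx (hout x hc)
  rw [h1, sum_triples]
  exact Finset.sum_congr rfl (fun q _ => by rw [hz q, add_zero])

/-- The linear "fold" homotopy transferring weight from vertex `u` to vertex `v`. -/
def push (v u : ℕ) (t : ℝ) (w : ℕ → ℝ) : ℕ → ℝ :=
  fun i => if i = v then w v + t * w u else if i = u then (1 - t) * w u else w i

lemma SpSet.w3j {m j : ℕ} {w : ℕ → ℝ} (hw : w ∈ SpSet m j) : w (3*j) = 0 := by
  obtain ⟨h0, hIcc, hsp, hsum, hvan⟩ := hw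
  rcases Nat.eq_zero_or_pos j with hj | hj
  · subst hj
    by_contra hc
    have := hIcc _ hc
    simp [Finset.mem_Icc] at this
  · exact hvan j hj le_rfl

lemma push_eq_self {v u : ℕ} {t : ℝ} {w : ℕ → ℝ} (hvu : v ≠ u) (hwu : w u = 0) :
    push v u t w = w := by
  funext i
  simp only [push]
  split_ifs with h1 h2
  · rw [h1, hwu, mul_zero, add_zero]
  · rw [h2, hwu, mul_zero]
  · rfl

lemma push_mem {m j : ℕ} (hm : 3*j+3 ≤ m) {t : ℝ} (ht0 : 0 ≤ t) (ht1 : t ≤ 1)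
    {w : ℕ → ℝ} (hw : w ∈ SpSet m j) : push (3*j+1) (3*j+3) t w ∈ SpSet m j := by
  obtain ⟨h0, hIcc, hsp, hsum, hvan⟩ := hw
  have hw3j : w (3*j) = 0 := SpSet.w3j ⟨h0, hIcc, hsp, hsum, hvan⟩
  set v := 3*j+1 with hv
  set u := 3*j+3 with hu
  have hvu : v ≠ u := by omega
  have hvIcc : v ∈ Finset.Icc 1 m := by simp [Finset.mem_Icc]; omega
  have huIcc : u ∈ Finset.Icc 1 m := by simp [Finset.mem_Icc]; omega
  -- nonzero coordinates of the pushed function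
  have hne : ∀ i, push v u t w i ≠ 0 → w i ≠ 0 ∨ i = v := by
    intro i hi
    by_cases h1 : i = v
    · exact Or.inr h1
    · by_cases h2 : i = u
      · subst h2
        left
        simp only [push, if_neg h1, if_pos rfl] at hi
        intro hc; rw [hc, mul_zero] at hi; exact hi rfl
      · left; simpa only [push, if_neg h1, if_neg h2] using hi
  refine ⟨?_, ?_, ?_, ?_, ?_⟩
  · intro i
    simp only [push]
    split_ifs with h1 h2
    · exact add_nonneg (h0 v) (mul_nonneg ht0 (h0 u))
    · exact mul_nonneg (by linarith) (h0 u)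
    · exact h0 i
  · intro i hi
    simp only [push] at hi
    split_ifs at hi with h1 h2
    · subst h1; exact hvIcc
    · subst h2; exact huIcc
    · exact hIcc i hi
  · by_cases hwu : w u = 0
    · rw [push_eq_self hvu hwu]; exact hsp
    · have h2' : w (3*j+2) = 0 := by
        by_contra hc
        exact hsp (3*j+2) ⟨hc, by rwa [show 3*j+2+1 = u by omega]⟩
      have h4' : w (3*j+4) = 0 := by
        by_contra hc
        exact hsp (3*j+3) ⟨hwu, by rwa [show 3*j+3+1 = 3*j+4 by omega]⟩
      rintro i ⟨ha, hb⟩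
      rcases hne i ha with hwi | hiv
      · rcases hne (i+1) hb with hwi1 | hi1v
        · exact hsp i ⟨hwi, hwi1⟩
        · have : i = 3*j := by omega
          rw [this, hw3j] at hwi; exact hwi rfl
      · rcases hne (i+1) hb with hwi1 | hi1v
        · have : i + 1 = 3*j+2 := by omega
          rw [this, h2'] at hwi1; exact hwi1 rfl
        · omega
  · have hfun : ∀ i, push v u t w i
        = w i + ((if i = v then t * w u else 0) - (if i = u then t * w u else 0)) := by
      intro i
      by_cases h1 : i = v
      · subst h1; simp [push, hvu]
      · by_cases h2 : i = u
        · subst h2; simp [push, h1]; ring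
        · simp [push, h1, h2]
    rw [Finset.sum_congr rfl (fun i _ => hfun i), Finset.sum_add_distrib,
      Finset.sum_sub_distrib, Finset.sum_ite_eq' _ v (fun _ => t * w u),
      Finset.sum_ite_eq' _ u (fun _ => t * w u), if_pos hvIcc, if_pos huIcc, hsum]
    ring
  · intro i h1 h2
    have hiv : 3*i ≠ v := by omega
    have hiu : 3*i ≠ u := by omega
    simp only [push, if_neg hiv, if_neg hiu]
    exact hvan i h1 h2

lemma push_one_mem {m j : ℕ} (hm : 3*j+3 ≤ m)
    {w : ℕ → ℝ} (hw : w ∈ SpSet m j) : push (3*j+1) (3*j+3) 1 w ∈ SpSet m (j+1) := by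
  obtain ⟨h0, hIcc, hsp, hsum, hvan⟩ := push_mem hm zero_le_one le_rfl hw
  refine ⟨h0, hIcc, hsp, hsum, ?_⟩
  intro i hi1 hi2
  rcases Nat.lt_or_ge i (j+1) with hij | hij
  · exact hvan i hi1 (by omega)
  · have : i = j + 1 := by omega
    subst this
    simp only [push]
    rw [if_neg (by omega), if_pos (by omega)]
    ring

lemma push_zero_eq {v u : ℕ} {w : ℕ → ℝ} (hvu : v ≠ u) : push v u 0 w = w := by
  funext i
  simp only [push]
  split_ifs with h1 h2
  · rw [h1]; ring
  · rw [h2]; ring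
  · rfl

lemma SpSet_mono {m : ℕ} {j : ℕ} : SpSet m (j+1) ⊆ SpSet m j := by
  rintro w ⟨h0, h1, h2, h3, h4⟩
  exact ⟨h0, h1, h2, h3, fun i hi hij => h4 i hi (by omega)⟩

lemma continuous_push (v u : ℕ) {X : Type*} [TopologicalSpace X]
    {t : X → ℝ} {w : X → ℕ → ℝ} (ht : Continuous t) (hw : Continuous w) :
    Continuous (fun x => push v u (t x) (w x)) := by
  apply continuous_pi
  intro i
  by_cases h1 : i = v
  · simp only [push, if_pos h1]
    exact ((continuous_apply v).comp hw).add (ht.mul ((continuous_apply u).comp hw))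
  · by_cases h2 : i = u
    · simp only [push, if_neg h1, if_pos h2]
      exact ((continuous_const.sub ht).mul ((continuous_apply u).comp hw))
    · simp only [push, if_neg h1, if_neg h2]
      exact (continuous_apply i).comp hw

lemma step_equiv (m j : ℕ) (hm : 3*j+3 ≤ m) :
    Nonempty (ContinuousMap.HomotopyEquiv ↥(SpSet m (j+1)) ↥(SpSet m j)) := by
  set v := 3*j+1 with hv
  set u := 3*j+3 with hu
  have hvu : v ≠ u := by omega
  -- the inclusion
  let incl : C(↥(SpSet m (j+1)), ↥(SpSet m j)) :=
    ⟨fun w => ⟨w.1, SpSet_mono w.2⟩, (continuous_subtype_val).subtype_mk _⟩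
  -- the retraction
  let ret : C(↥(SpSet m j), ↥(SpSet m (j+1))) :=
    ⟨fun w => ⟨push v u 1 w.1, push_one_mem hm w.2⟩,
      (continuous_push v u continuous_const continuous_subtype_val).subtype_mk _⟩
  -- homotopy from the identity to incl ∘ ret
  let H : ContinuousMap.Homotopy (ContinuousMap.id ↥(SpSet m j)) (incl.comp ret) :=
    { toFun := fun p => ⟨push v u (p.1 : ℝ) p.2.1,
        push_mem hm p.1.2.1 p.1.2.2 p.2.2⟩
      continuous_toFun := by
        apply Continuous.subtype_mk
        exact continuous_push v u (continuous_subtype_val.comp continuous_fst)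
          (continuous_subtype_val.comp continuous_snd)
      map_zero_left := by
        intro w
        apply Subtype.ext
        show push v u ((0 : unitInterval) : ℝ) w.1 = w.1
        rw [show ((0 : unitInterval) : ℝ) = 0 from rfl]
        exact push_zero_eq hvu
      map_one_left := by
        intro w
        apply Subtype.ext
        rfl }
  refine ⟨{ toFun := incl, invFun := ret, left_inv := ?_, right_inv := ?_ }⟩
  · -- ret ∘ incl = id
    have : ret.comp incl = ContinuousMap.id _ := by
      ext w
      show (push v u 1 w.1 : ℕ → ℝ) _ = _
      have hwu : (w : ℕ → ℝ) u = 0 := by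
        have := w.2.2.2.2.2 (j+1) (by omega) le_rfl
        rwa [show 3*(j+1) = u by omega] at this
      rw [push_eq_self hvu hwu]
      rfl
    rw [this]
  · exact (ContinuousMap.Homotopic.symm ⟨H⟩)

lemma chain_equiv (m : ℕ) : ∀ K, 3*K ≤ m →
    Nonempty (ContinuousMap.HomotopyEquiv ↥(SpSet m 0) ↥(SpSet m K)) := by
  intro K
  induction K with
  | zero => exact fun _ => ⟨ContinuousMap.HomotopyEquiv.refl _⟩
  | succ K ih =>
    intro h
    obtain ⟨e1⟩ := ih (by omega)
    obtain ⟨e2⟩ := step_equiv m K (by omega)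
    exact ⟨e1.trans e2.symm⟩

/-- When `m = 3K+1`, the vertex `m` is isolated in the reduced complex,
so `SpSet m K` is a cone and hence contractible. -/
lemma spSet_contractible (m K : ℕ) (hm : m = 3*K+1) (hK : 1 ≤ K) :
    ContractibleSpace ↥(SpSet m K) := by
  set e : ℕ → ℝ := fun i => if i = m then 1 else 0 with he
  have hmIcc : m ∈ Finset.Icc 1 m := by simp [Finset.mem_Icc]; omega
  have he_mem : e ∈ SpSet m K := by
    refine ⟨fun i => by simp only [he]; split_ifs <;> norm_num,
      fun i hi => ?_, fun i ⟨hi, hi1⟩ => ?_, ?_, fun i h1 h2 => ?_⟩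
    · simp only [he] at hi
      split_ifs at hi with h
      · subst h; exact hmIcc
      · exact absurd rfl hi
    · simp only [he] at hi hi1
      split_ifs at hi hi1 with h h'
      · omega
      · exact absurd rfl hi1
      · exact absurd rfl hi
      · exact absurd rfl hi
    · simp only [he, Finset.sum_ite_eq' _ m (fun _ => (1:ℝ)), if_pos hmIcc]
    · simp only [he]
      rw [if_neg (by omega)]
  -- cone homotopy
  have hG : ∀ (t : ℝ), 0 ≤ t → t ≤ 1 → ∀ w ∈ SpSet m K,
      (fun i => (1-t) * w i + t * e i) ∈ SpSet m K := by
    intro t ht0 ht1 w hw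
    obtain ⟨h0, hIcc, hsp, hsum, hvan⟩ := hw
    have hw3K : w (3*K) = 0 := hvan K hK le_rfl
    have hwm1 : w (m+1) = 0 := by
      by_contra hc
      have := hIcc _ hc
      simp [Finset.mem_Icc] at this
    refine ⟨fun i => ?_, fun i hi => ?_, fun i ⟨hi, hi1⟩ => ?_, ?_, fun i h1 h2 => ?_⟩
    · have := he_mem.1 i
      have := h0 i
      have h1t : (0:ℝ) ≤ 1 - t := by linarith
      positivity
    · by_cases him : i = m
      · subst him; exact hmIcc
      · simp only [he, if_neg him, mul_zero, add_zero] at hi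
        have : w i ≠ 0 := by
          intro hc; rw [hc, mul_zero] at hi; exact hi rfl
        exact hIcc i this
    · have hne : ∀ j, ((1-t) * w j + t * e j ≠ 0) → w j ≠ 0 ∨ j = m := by
        intro j hj
        by_cases hjm : j = m
        · exact Or.inr hjm
        · left
          intro hc
          apply hj
          simp only [he, if_neg hjm]
          rw [hc]; ring
      rcases hne i hi with hwi | him
      · rcases hne (i+1) hi1 with hwi1 | him1
        · exact hsp i ⟨hwi, hwi1⟩
        · apply hwi
          rw [show i = 3*K by omega]
          exact hw3K
      · rcases hne (i+1) hi1 with hwi1 | him1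
        · apply hwi1
          rw [show i + 1 = m + 1 by omega]
          exact hwm1
        · omega
    · rw [Finset.sum_add_distrib, ← Finset.mul_sum, ← Finset.mul_sum, hsum, he_mem.2.2.2.1]
      ring
    · show (1-t) * w (3*i) + t * e (3*i) = 0
      rw [hvan i h1 h2]
      simp only [he]
      rw [if_neg (by omega)]
      ring
  rw [contractible_iff_id_nullhomotopic]
  refine ⟨⟨e, he_mem⟩, ⟨?_⟩⟩
  exact
    { toFun := fun p => ⟨fun i => (1-(p.1:ℝ)) * (p.2.1 i) + (p.1:ℝ) * e i,
        hG p.1 p.1.2.1 p.1.2.2 p.2.1 p.2.2⟩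
      continuous_toFun := by
        apply Continuous.subtype_mk
        apply continuous_pi
        intro i
        have hc : Continuous fun (p : unitInterval × ↥(SpSet m K)) => (p.1 : ℝ) :=
          continuous_subtype_val.comp continuous_fst
        exact ((continuous_const.sub hc).mul
          ((continuous_apply i).comp (continuous_subtype_val.comp continuous_snd))).add
          (hc.mul continuous_const)
      map_zero_left := by
        intro w
        apply Subtype.ext
        funext i
        show (1-((0:unitInterval):ℝ)) * (w.1 i) + ((0:unitInterval):ℝ) * e i = w.1 i
        rw [show ((0:unitInterval):ℝ) = 0 from rfl]
        ring
      map_one_left := by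
        intro w
        apply Subtype.ext
        funext i
        show (1-((1:unitInterval):ℝ)) * (w.1 i) + ((1:unitInterval):ℝ) * e i = e i
        rw [show ((1:unitInterval):ℝ) = 1 from rfl]
        ring }

open Finset in
/-- The `ℓ¹`-sphere in `EuclideanSpace ℝ (Fin p)`. -/
def L1 (p : ℕ) : Set (EuclideanSpace ℝ (Fin p)) := {x | ∑ q, |x q| = 1}

def psi (p : ℕ) (x : EuclideanSpace ℝ (Fin p)) : ℕ → ℝ :=
  fun i => if h : i % 3 ≠ 0 ∧ i / 3 < p then
    (if i % 3 = 1 then max (x ⟨i/3, h.2⟩) 0 else max (-(x ⟨i/3, h.2⟩)) 0) else 0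

lemma psi_one {p : ℕ} (x : EuclideanSpace ℝ (Fin p)) {q : ℕ} (hq : q < p) :
    psi p x (3*q+1) = max (x ⟨q, hq⟩) 0 := by
  have hc : (3*q+1) % 3 ≠ 0 ∧ (3*q+1) / 3 < p := ⟨by omega, by omega⟩
  rw [psi, dif_pos hc, if_pos (by omega : (3*q+1) % 3 = 1)]
  congr 1
  exact congrArg x (Fin.ext (show (3*q+1)/3 = q by omega))

lemma psi_two {p : ℕ} (x : EuclideanSpace ℝ (Fin p)) {q : ℕ} (hq : q < p) :
    psi p x (3*q+2) = max (-(x ⟨q, hq⟩)) 0 := by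
  have hc : (3*q+2) % 3 ≠ 0 ∧ (3*q+2) / 3 < p := ⟨by omega, by omega⟩
  rw [psi, dif_pos hc, if_neg (by omega : ¬ (3*q+2) % 3 = 1)]
  congr 2
  exact congrArg x (Fin.ext (show (3*q+2)/3 = q by omega))

lemma psi_not {p : ℕ} (x : EuclideanSpace ℝ (Fin p)) {i : ℕ}
    (h : ¬ (i % 3 ≠ 0 ∧ i / 3 < p)) : psi p x i = 0 := by
  rw [psi, dif_neg h]

lemma psi_nonneg {p : ℕ} (x : EuclideanSpace ℝ (Fin p)) (i : ℕ) : 0 ≤ psi p x i := by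
  rw [psi]
  split_ifs <;> simp [le_max_right]

lemma psi_ne {p : ℕ} (x : EuclideanSpace ℝ (Fin p)) {i : ℕ} (h : psi p x i ≠ 0) :
    i % 3 ≠ 0 ∧ i / 3 < p := by
  by_contra hc
  exact h (psi_not x hc)

lemma max_pos_of_ne {a : ℝ} (h : max a 0 ≠ 0) : 0 < a := by
  by_contra hc
  push_neg at hc
  exact h (max_eq_right hc)

lemma spSet_hz {m K : ℕ} (h2 : m ≤ 3*K+2) {w : ℕ → ℝ} (hw : w ∈ SpSet m K) :
    ∀ q, w (3*q+3) = 0 := by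
  intro q
  obtain ⟨h0, hIcc, hsp, hsum, hvan⟩ := hw
  by_cases hqm : 3*q+3 ≤ m
  · have := hvan (q+1) (by omega) (by omega)
    rwa [show 3*(q+1) = 3*q+3 by ring] at this
  · by_contra hc
    have := hIcc _ hc
    simp [Finset.mem_Icc] at this
    omega

lemma spSet_pair {m K : ℕ} {w : ℕ → ℝ} (hw : w ∈ SpSet m K) (q : ℕ) :
    w (3*q+1) = 0 ∨ w (3*q+2) = 0 := by
  obtain ⟨h0, hIcc, hsp, hsum, hvan⟩ := hw
  have := hsp (3*q+1)
  rw [show 3*q+1+1 = 3*q+2 by ring] at this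
  by_cases h : w (3*q+1) = 0
  · exact Or.inl h
  · right
    by_contra hc
    exact this ⟨h, hc⟩

lemma spSet_pair_sum {m K p : ℕ} (h2 : m ≤ 3*K+2) (h3 : m ≤ 3*p) {w : ℕ → ℝ}
    (hw : w ∈ SpSet m K) :
    ∑ q ∈ Finset.range p, (w (3*q+1) + w (3*q+2)) = 1 := by
  rw [← sum_pairs m p w h3 (spSet_hz h2 hw) hw.2.1]
  exact hw.2.2.2.1

/-- The homeomorphism from the reduced sparse realization to the `ℓ¹` sphere. -/
noncomputable def spSetHomeoL1 (m K p : ℕ) (h2 : m ≤ 3*K+2) (h3 : m ≤ 3*p)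
    (h4 : 3*p ≤ m+1) : ↥(SpSet m K) ≃ₜ ↥(L1 p) where
  toFun w := ⟨WithLp.toLp 2 (fun q => w.1 (3*(q:ℕ)+1) - w.1 (3*(q:ℕ)+2) : Fin p → ℝ), by
    show ∑ q : Fin p, |w.1 (3*(q:ℕ)+1) - w.1 (3*(q:ℕ)+2)| = 1
    have key : ∀ q : ℕ, |w.1 (3*q+1) - w.1 (3*q+2)|
        = w.1 (3*q+1) + w.1 (3*q+2) := by
      intro q
      rcases spSet_pair w.2 q with h | h
      · rw [h, zero_sub, abs_neg, abs_of_nonneg (w.2.1 _), zero_add]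
      · rw [h, sub_zero, abs_of_nonneg (w.2.1 _), add_zero]
    calc ∑ q : Fin p, |w.1 (3*(q:ℕ)+1) - w.1 (3*(q:ℕ)+2)|
        = ∑ q ∈ Finset.range p, |w.1 (3*q+1) - w.1 (3*q+2)| :=
          Fin.sum_univ_eq_sum_range (fun q => |w.1 (3*q+1) - w.1 (3*q+2)|) p
      _ = ∑ q ∈ Finset.range p, (w.1 (3*q+1) + w.1 (3*q+2)) :=
          Finset.sum_congr rfl (fun q _ => key q)
      _ = 1 := spSet_pair_sum h2 h3 w.2⟩
  invFun x := ⟨psi p x.1, by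
    refine ⟨psi_nonneg x.1, fun i hi => ?_, fun i ⟨hi, hi1⟩ => ?_, ?_, fun i hi1 hi2 => ?_⟩
    · obtain ⟨hmod, hdiv⟩ := psi_ne x.1 hi
      simp only [Finset.mem_Icc]
      omega
    · obtain ⟨hmod, hdiv⟩ := psi_ne x.1 hi
      obtain ⟨hmod1, hdiv1⟩ := psi_ne x.1 hi1
      have hm1 : i % 3 = 1 := by omega
      have hm2 : (i+1) % 3 = 2 := by omega
      set q := i / 3 with hq
      have hi_eq : i = 3*q+1 := by omega
      have hi1_eq : i + 1 = 3*q+2 := by omega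
      rw [hi_eq, psi_one x.1 (by omega : q < p)] at hi
      rw [hi1_eq, psi_two x.1 (by omega : q < p)] at hi1
      have hpos := max_pos_of_ne hi
      have hneg := max_pos_of_ne hi1
      linarith
    · have hz : ∀ q, psi p x.1 (3*q+3) = 0 := fun q =>
        psi_not x.1 (by push_neg; intro h; omega)
      have hout : ∀ i, psi p x.1 i ≠ 0 → i ∈ Finset.Icc 1 m := by
        intro i hi
        obtain ⟨hmod, hdiv⟩ := psi_ne x.1 hi
        simp only [Finset.mem_Icc]
        omega
      rw [sum_pairs m p _ h3 hz hout]
      have key : ∀ q ∈ Finset.range p, psi p x.1 (3*q+1) + psi p x.1 (3*q+2)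
          = (fun q : ℕ => if h : q < p then |x.1 ⟨q, h⟩| else 0) q := by
        intro q hq
        have hqp : q < p := Finset.mem_range.1 hq
        simp only [dif_pos hqp]
        rw [psi_one x.1 hqp, psi_two x.1 hqp]
        exact max_zero_add_max_neg_zero_eq_abs_self _
      rw [Finset.sum_congr rfl key, ← Fin.sum_univ_eq_sum_range]
      have hfin : ∀ q : Fin p, (if h : (q:ℕ) < p then |x.1 ⟨(q:ℕ), h⟩| else 0) = |x.1 q| := by
        intro q
        rw [dif_pos q.isLt]
      rw [Finset.sum_congr rfl (fun q _ => hfin q)]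
      exact x.2
    · exact psi_not x.1 (by push_neg; intro h; omega)⟩
  left_inv := by
    intro w
    apply Subtype.ext
    funext i
    show psi p _ i = w.1 i
    obtain ⟨h0, hIcc, hsp, hsum, hvan⟩ := w.2
    by_cases h : i % 3 ≠ 0 ∧ i / 3 < p
    · set q := i / 3 with hqdef
      have hqp : q < p := h.2
      have hcoe : ∀ (hh : q < p), w.1 (3*((⟨q, hh⟩ : Fin p):ℕ)+1) - w.1 (3*((⟨q, hh⟩ : Fin p):ℕ)+2)
          = w.1 (3*q+1) - w.1 (3*q+2) := fun hh => rfl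
      by_cases h1 : i % 3 = 1
      · have hieq : i = 3*q+1 := by omega
        rw [hieq, psi_one _ hqp]
        show max (w.1 (3*q+1) - w.1 (3*q+2)) 0 = w.1 (3*q+1)
        rcases spSet_pair ⟨h0, hIcc, hsp, hsum, hvan⟩ q with hz | hz
        · rw [hz, zero_sub, max_eq_right (by have := h0 (3*q+2); linarith)]
        · rw [hz, sub_zero, max_eq_left (h0 _)]
      · have h2' : i % 3 = 2 := by omega
        have hieq : i = 3*q+2 := by omega
        rw [hieq, psi_two _ hqp]
        show max (-(w.1 (3*q+1) - w.1 (3*q+2))) 0 = w.1 (3*q+2)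
        rcases spSet_pair ⟨h0, hIcc, hsp, hsum, hvan⟩ q with hz | hz
        · rw [hz, zero_sub, neg_neg, max_eq_left (h0 _)]
        · rw [hz, sub_zero, max_eq_right (by have := h0 (3*q+1); linarith)]
    · rw [psi_not _ h]
      push_neg at h
      by_contra hc
      have hm2 := hIcc i (fun hcc => hc hcc.symm) 
      simp only [Finset.mem_Icc] at hm2
      by_cases h3' : i % 3 = 0
      · have hiK : i / 3 ≤ K := by omega
        have hi1 : 1 ≤ i / 3 := by omega
        have := hvan (i/3) hi1 hiK
        rw [show 3*(i/3) = i by omega] at this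
        exact hc this.symm
      · have := h h3'
        omega
  right_inv := by
    intro x
    apply Subtype.ext
    refine (WithLp.ext_iff 2).2 (funext fun q => ?_)
    show psi p x.1 (3*(q:ℕ)+1) - psi p x.1 (3*(q:ℕ)+2) = x.1 q
    rw [psi_one x.1 q.isLt, psi_two x.1 q.isLt]
    show max (x.1 q) 0 - max (-(x.1 q)) 0 = x.1 q
    exact max_zero_sub_max_neg_zero_eq_self _
  continuous_toFun := by
    apply Continuous.subtype_mk
    exact (PiLp.continuous_toLp 2 _).comp <| continuous_pi fun q =>
      (((continuous_apply (3*(q:ℕ)+1)).comp continuous_subtype_val).sub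
        ((continuous_apply (3*(q:ℕ)+2)).comp continuous_subtype_val))
  continuous_invFun := by
    apply Continuous.subtype_mk
    apply continuous_pi
    intro i
    by_cases h : i % 3 ≠ 0 ∧ i / 3 < p
    · have heq : (fun (x : ↥(L1 p)) => psi p x.1 i)
          = fun x => if i % 3 = 1 then max (x.1 ⟨i/3, h.2⟩) 0
              else max (-(x.1 ⟨i/3, h.2⟩)) 0 := by
        funext x
        rw [psi, dif_pos h]
      rw [heq]
      split_ifs
      · exact ((PiLp.continuous_apply 2 _ _).comp continuous_subtype_val).max continuous_const
      · exact (((PiLp.continuous_apply 2 _ _).comp continuous_subtype_val).neg).max continuous_const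
    · have heq : (fun (x : ↥(L1 p)) => psi p x.1 i) = fun _ => 0 := by
        funext x
        exact psi_not x.1 h
      rw [heq]
      exact continuous_const

lemma L1_ne_zero {p : ℕ} {x : EuclideanSpace ℝ (Fin p)} (hx : x ∈ L1 p) : x ≠ 0 := by
  intro h
  rw [h] at hx
  simp only [L1, Set.mem_setOf_eq] at hx
  norm_num at hx

lemma sphere_sum_pos {p : ℕ} {y : EuclideanSpace ℝ (Fin p)}
    (hy : y ∈ Metric.sphere (0 : EuclideanSpace ℝ (Fin p)) 1) : 0 < ∑ q, |y q| := by
  have hy' : ‖y‖ = 1 := by rwa [mem_sphere_zero_iff_norm] at hy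
  have hne : y ≠ 0 := by
    intro h; rw [h, norm_zero] at hy'; norm_num at hy'
  obtain ⟨q, hq⟩ : ∃ q, y q ≠ 0 := by
    by_contra hc
    push_neg at hc
    exact hne ((WithLp.ext_iff 2).2 (funext fun q => by simp [hc q]))
  exact Finset.sum_pos' (fun r _ => abs_nonneg _) ⟨q, Finset.mem_univ q, abs_pos.2 hq⟩

/-- Radial homeomorphism between the `ℓ¹` sphere and the Euclidean sphere. -/
noncomputable def L1HomeoSphere (p : ℕ) :
    ↥(L1 p) ≃ₜ ↥(Metric.sphere (0 : EuclideanSpace ℝ (Fin p)) 1) where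
  toFun x := ⟨‖x.1‖⁻¹ • x.1, by
    rw [mem_sphere_zero_iff_norm, norm_smul, norm_inv, norm_norm]
    exact inv_mul_cancel₀ (norm_ne_zero_iff.2 (L1_ne_zero x.2))⟩
  invFun y := ⟨(∑ q, |y.1 q|)⁻¹ • y.1, by
    have hS := sphere_sum_pos y.2
    show ∑ q, |((∑ q, |y.1 q|)⁻¹ • y.1) q| = 1
    have : ∀ q, |((∑ q, |y.1 q|)⁻¹ • y.1) q| = (∑ q, |y.1 q|)⁻¹ * |y.1 q| := by
      intro q
      show |(∑ q, |y.1 q|)⁻¹ * y.1 q| = _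
      rw [abs_mul, abs_of_nonneg (le_of_lt (inv_pos.2 hS))]
    rw [Finset.sum_congr rfl (fun q _ => this q), ← Finset.mul_sum]
    exact inv_mul_cancel₀ (ne_of_gt hS)⟩
  left_inv := by
    intro x
    apply Subtype.ext
    show (∑ q, |(‖x.1‖⁻¹ • x.1) q|)⁻¹ • (‖x.1‖⁻¹ • x.1) = x.1
    have hn : ‖x.1‖ ≠ 0 := norm_ne_zero_iff.2 (L1_ne_zero x.2)
    have hpos : 0 < ‖x.1‖ := lt_of_le_of_ne (norm_nonneg _) (Ne.symm hn)
    have habs : ∀ q, |(‖x.1‖⁻¹ • x.1) q| = ‖x.1‖⁻¹ * |x.1 q| := by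
      intro q
      show |‖x.1‖⁻¹ * x.1 q| = _
      rw [abs_mul, abs_of_nonneg (le_of_lt (inv_pos.2 hpos))]
    rw [Finset.sum_congr rfl (fun q _ => habs q), ← Finset.mul_sum, x.2,
      mul_one, inv_inv, smul_smul, mul_inv_cancel₀ hn, one_smul]
  right_inv := by
    intro y
    apply Subtype.ext
    show ‖(∑ q, |y.1 q|)⁻¹ • y.1‖⁻¹ • ((∑ q, |y.1 q|)⁻¹ • y.1) = y.1
    have hS := sphere_sum_pos y.2
    have hy' : ‖y.1‖ = 1 := by
      have := y.2; rwa [mem_sphere_zero_iff_norm] at this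
    rw [norm_smul, norm_inv, Real.norm_eq_abs, abs_of_nonneg (le_of_lt hS), hy', mul_one, inv_inv,
      smul_smul, mul_inv_cancel₀ (ne_of_gt hS), one_smul]
  continuous_toFun := by
    apply Continuous.subtype_mk
    exact ((continuous_norm.comp continuous_subtype_val).inv₀
      (fun x => norm_ne_zero_iff.2 (L1_ne_zero x.2))).smul continuous_subtype_val
  continuous_invFun := by
    apply Continuous.subtype_mk
    have hsum : Continuous fun (y : ↥(Metric.sphere (0 : EuclideanSpace ℝ (Fin p)) 1)) =>
        ∑ q, |y.1 q| := by
      apply continuous_finset_sum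
      intro q _
      exact ((PiLp.continuous_apply 2 _ q).comp continuous_subtype_val).abs
    exact (hsum.inv₀ (fun y => ne_of_gt (sphere_sum_pos y.2))).smul continuous_subtype_val

/-- The sparse complex on `{1,...,2n}` is homotopy equivalent to `S^{2k-1}` if `n = 3k`,
to `S^{2k}` if `n = 3k+1`, and is contractible if `n = 3k+2`. -/
theorem stmt2 (n k : ℕ) :
    (n = 3 * k → Nonempty (ContinuousMap.HomotopyEquiv
      ↥(geomReal {σ | SparseFace (2 * n) σ})
      ↥(Metric.sphere (0 : EuclideanSpace ℝ (Fin (2 * k))) 1))) ∧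
    (n = 3 * k + 1 → Nonempty (ContinuousMap.HomotopyEquiv
      ↥(geomReal {σ | SparseFace (2 * n) σ})
      ↥(Metric.sphere (0 : EuclideanSpace ℝ (Fin (2 * k + 1))) 1))) ∧
    (n = 3 * k + 2 → ContractibleSpace ↥(geomReal {σ | SparseFace (2 * n) σ})) := by
  refine ⟨?_, ?_, ?_⟩
  · intro hn
    subst hn
    obtain ⟨e1⟩ := chain_equiv (2*(3*k)) (2*k) (by omega)
    have e0 : ↥(geomReal {σ | SparseFace (2*(3*k)) σ}) ≃ₜ ↥(SpSet (2*(3*k)) 0) :=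
      Homeomorph.setCongr (geomReal_eq _)
    have e2 := spSetHomeoL1 (2*(3*k)) (2*k) (2*k) (by omega) (by omega) (by omega)
    have e3 := L1HomeoSphere (2*k)
    exact ⟨(e0.toHomotopyEquiv.trans e1).trans (e2.trans e3).toHomotopyEquiv⟩
  · intro hn
    subst hn
    obtain ⟨e1⟩ := chain_equiv (2*(3*k+1)) (2*k) (by omega)
    have e0 : ↥(geomReal {σ | SparseFace (2*(3*k+1)) σ}) ≃ₜ ↥(SpSet (2*(3*k+1)) 0) :=
      Homeomorph.setCongr (geomReal_eq _)
    have e2 := spSetHomeoL1 (2*(3*k+1)) (2*k) (2*k+1) (by omega) (by omega) (by omega)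
    have e3 := L1HomeoSphere (2*k+1)
    exact ⟨(e0.toHomotopyEquiv.trans e1).trans (e2.trans e3).toHomotopyEquiv⟩
  · intro hn
    subst hn
    obtain ⟨e1⟩ := chain_equiv (2*(3*k+2)) (2*k+1) (by omega)
    have e0 : ↥(geomReal {σ | SparseFace (2*(3*k+2)) σ}) ≃ₜ ↥(SpSet (2*(3*k+2)) 0) :=
      Homeomorph.setCongr (geomReal_eq _)
    haveI := spSet_contractible (2*(3*k+2)) (2*k+1) (by omega) (by omega)
    exact (e0.toHomotopyEquiv.trans e1).contractibleSpace
end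

section
/- The reduced Euler characteristic of the sparse complex on {1,...,2n} (no two consecutive vertices in a face) equals −1 if n ≡ 0 (mod 3), equals +1 if n ≡ 1 (mod 3), and equals 0 if n ≡ 2 (mod 3). -/
open Finset

namespace SparseFace

variable {m k : ℕ} {σ : Finset ℕ}

theorem notMem_of_lt (hσ : SparseFace m σ) (hk : m < k) : k ∉ σ := fun hkσ => by
  have := mem_Icc.1 (hσ.1 hkσ)
  omega

theorem succ_iff_of_notMem (h : m + 1 ∉ σ) : SparseFace (m + 1) σ ↔ SparseFace m σ := by
  refine and_congr_left' ⟨fun hs x hx => ?_, fun hs => hs.trans (Icc_subset_Icc_right m.le_succ)⟩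
  have hx' := mem_Icc.1 (hs hx)
  have : x ≠ m + 1 := fun hxm => h (hxm ▸ hx)
  exact mem_Icc.2 ⟨hx'.1, by omega⟩

theorem insert_iff (h : m + 2 ∉ σ) : SparseFace (m + 2) (insert (m + 2) σ) ↔ SparseFace m σ := by
  constructor
  · rintro ⟨hsub, hsp⟩
    have h1 : m + 1 ∉ σ := fun h1 => hsp (m + 1) ⟨mem_insert_of_mem h1, mem_insert_self _ _⟩
    have hσ : SparseFace (m + 2) σ :=
      ⟨(subset_insert _ _).trans hsub, fun i hi => hsp i ⟨mem_insert_of_mem hi.1, mem_insert_of_mem hi.2⟩⟩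
    exact (succ_iff_of_notMem h1).1 ((succ_iff_of_notMem h).1 hσ)
  · rintro ⟨hsub, hsp⟩
    refine ⟨insert_subset (by simp) (hsub.trans (Icc_subset_Icc_right (by omega))), ?_⟩
    rintro i ⟨hi, hi1⟩
    have hbound : ∀ j ∈ σ, j ≤ m := fun j hj => (mem_Icc.1 (hsub hj)).2
    rcases mem_insert.1 hi with rfl | hi <;> rcases mem_insert.1 hi1 with hi1 | hi1
    · omega
    · exact absurd (hbound _ hi1) (by omega)
    · exact absurd (hbound _ hi) (by omega)
    · exact hsp i ⟨hi, hi1⟩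

end SparseFace

section

open Classical

noncomputable def sparseFaces (m : ℕ) : Finset (Finset ℕ) :=
  (Icc 1 m).powerset.filter (SparseFace m)

theorem mem_sparseFaces {m : ℕ} {σ : Finset ℕ} : σ ∈ sparseFaces m ↔ SparseFace m σ := by
  rw [sparseFaces, mem_filter, mem_powerset]
  exact and_iff_right_of_imp And.left

theorem sparseFaces_of_le_one {m : ℕ} (hm : m ≤ 1) : sparseFaces m = (Icc 1 m).powerset := by
  refine filter_true_of_mem fun σ hσ => ⟨mem_powerset.1 hσ, fun i ⟨hi, hi1⟩ => ?_⟩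
  have := mem_Icc.1 (mem_powerset.1 hσ hi)
  have := mem_Icc.1 (mem_powerset.1 hσ hi1)
  omega

theorem filter_notMem_sparseFaces (m : ℕ) :
    (sparseFaces (m + 2)).filter (m + 2 ∉ ·) = sparseFaces (m + 1) := by
  ext σ
  rw [mem_filter, mem_sparseFaces, mem_sparseFaces]
  exact ⟨fun ⟨hσ, h⟩ => (SparseFace.succ_iff_of_notMem h).1 hσ,
    fun hσ => ⟨(SparseFace.succ_iff_of_notMem (hσ.notMem_of_lt (by omega))).2 hσ,
      hσ.notMem_of_lt (by omega)⟩⟩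

theorem filter_mem_sparseFaces (m : ℕ) :
    (sparseFaces (m + 2)).filter (m + 2 ∈ ·) = (sparseFaces m).image (insert (m + 2)) := by
  ext σ
  simp only [mem_filter, mem_image, mem_sparseFaces]
  constructor
  · rintro ⟨hσ, h⟩
    refine ⟨σ.erase (m + 2), ?_, insert_erase h⟩
    rw [← SparseFace.insert_iff (notMem_erase _ _), insert_erase h]
    exact hσ
  · rintro ⟨τ, hτ, rfl⟩
    exact ⟨(SparseFace.insert_iff (hτ.notMem_of_lt (by omega))).2 hτ, mem_insert_self _ _⟩

noncomputable def reducedEulerChar (m : ℕ) : ℤ :=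
  -∑ σ ∈ sparseFaces m, (-1 : ℤ) ^ σ.card

theorem reducedEulerChar_add_two (m : ℕ) :
    reducedEulerChar (m + 2) = reducedEulerChar (m + 1) - reducedEulerChar m := by
  have hinj : Set.InjOn (insert (m + 2)) (sparseFaces m : Set (Finset ℕ)) :=
    fun s hs t ht hst => by
      have hs' := (mem_sparseFaces.1 hs).notMem_of_lt (k := m + 2) (by omega)
      have ht' := (mem_sparseFaces.1 ht).notMem_of_lt (k := m + 2) (by omega)
      simpa only [erase_insert hs', erase_insert ht'] using congrArg (erase · (m + 2)) hst
  have hsum : ∑ σ ∈ (sparseFaces m).image (insert (m + 2)), (-1 : ℤ) ^ σ.card =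
      -∑ σ ∈ sparseFaces m, (-1 : ℤ) ^ σ.card := by
    rw [sum_image hinj, ← sum_neg_distrib]
    refine sum_congr rfl fun σ hσ => ?_
    rw [card_insert_of_notMem ((mem_sparseFaces.1 hσ).notMem_of_lt (by omega)), pow_succ]
    ring
  rw [reducedEulerChar, ← sum_filter_not_add_sum_filter _ (m + 2 ∈ ·),
    filter_notMem_sparseFaces, filter_mem_sparseFaces, hsum, reducedEulerChar, reducedEulerChar]
  ring

theorem reducedEulerChar_add_three (m : ℕ) : reducedEulerChar (m + 3) = -reducedEulerChar m := by
  have h := reducedEulerChar_add_two (m + 1)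
  rw [reducedEulerChar_add_two m] at h
  linear_combination h

theorem reducedEulerChar_periodic : Function.Periodic reducedEulerChar 6 := fun m => by
  rw [show m + 6 = m + 3 + 3 from rfl, reducedEulerChar_add_three, reducedEulerChar_add_three,
    neg_neg]

theorem reducedEulerChar_zero : reducedEulerChar 0 = -1 := by
  rw [reducedEulerChar, sparseFaces_of_le_one zero_le_one, sum_powerset_neg_one_pow_card]
  simp

theorem reducedEulerChar_one : reducedEulerChar 1 = 0 := by
  rw [reducedEulerChar, sparseFaces_of_le_one le_rfl, sum_powerset_neg_one_pow_card]
  simp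

theorem reducedEulerChar_two : reducedEulerChar 2 = 1 := by
  rw [reducedEulerChar_add_two 0, reducedEulerChar_zero, reducedEulerChar_one]
  norm_num

theorem reducedEulerChar_four : reducedEulerChar 4 = 0 := by
  rw [reducedEulerChar_add_three 1, reducedEulerChar_one, neg_zero]

end

open Classical in
/-- The reduced Euler characteristic `χ̃ = -∑_{σ face} (-1)^{|σ|}` of the sparse complex
on `{1,...,2n}` is `-1, +1, 0` according to `n ≡ 0, 1, 2 (mod 3)`. -/
theorem stmt3 (n : ℕ) :
    -(∑ σ ∈ (Finset.Icc 1 (2 * n)).powerset.filter (fun σ => SparseFace (2 * n) σ),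
        (-1 : ℤ) ^ σ.card) =
      if n % 3 = 0 then -1 else if n % 3 = 1 then 1 else 0 := by
  change reducedEulerChar (2 * n) = _
  rw [← reducedEulerChar_periodic.map_mod_nat, show 2 * n % 6 = 2 * (n % 3) by omega]
  obtain h | h | h : n % 3 = 0 ∨ n % 3 = 1 ∨ n % 3 = 2 := by omega
  all_goals simp [h, reducedEulerChar_zero, reducedEulerChar_two, reducedEulerChar_four]
end

section
/- For the partition λ = (3, 1^t) of n = t + 3, the simplicial complex δ_λ is isomorphic to the complex on vertex set {1,...,t+2} whose maximal simplices are exactly the sets {1,...,t+2} \ {i, i+1} for i = 1,...,t+1; i.e., a subset σ ⊆ {1,...,t+2} is a face iff there exists i with 1 ≤ i ≤ t+1 and i ∉ σ and i+1 ∉ σ. -/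
/-- `l` is a composition of `n`: a tuple of positive integers summing to `n`. -/
def IsComp (n : ℕ) (l : List ℕ) : Prop := (∀ x ∈ l, 0 < x) ∧ l.sum = n

/-- Refinement order on compositions: `x ≤ y` iff the parts of `x` are the sums of
consecutive (nonempty) blocks of the parts of `y`. -/
def CompLE (x y : List ℕ) : Prop :=
  ∃ L : List (List ℕ), (∀ b ∈ L, b ≠ []) ∧ L.flatten = y ∧ L.map List.sum = x

/-!
A composition `x` of `n` is determined by the set of its prefix sums, a subset of `{1, ..., n}`
containing `n`; removing `n` identifies compositions of `n` with subsets of `{1, ..., n - 1}`, and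
`x` refines into `y` exactly when the prefix sums of `x` are among those of `y`. The
compositions of type `(3, 1^t)` are the `(1^a, 3, 1^b)` with `a + b = t`, whose prefix sums are
everything except `a + 1, a + 2`. Hence a composition lies in `D_(3,1^t)` iff its set of proper
prefix sums avoids some pair `{i, i + 1}` with `1 ≤ i ≤ t + 1`.
-/

open Finset

namespace List

def prefixSums : List ℕ → Finset ℕ
  | [] => ∅
  | a :: l => insert a (l.prefixSums.image (a + ·))

@[simp]
lemma prefixSums_nil : ([] : List ℕ).prefixSums = ∅ := rfl

@[simp]
lemma prefixSums_cons (a : ℕ) (l : List ℕ) :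
    (a :: l).prefixSums = insert a (l.prefixSums.image (a + ·)) := rfl

lemma prefixSums_eq_empty {l : List ℕ} : l.prefixSums = ∅ ↔ l = [] := by
  cases l <;> simp

lemma le_sum_of_mem_prefixSums {l : List ℕ} {s : ℕ} (hs : s ∈ l.prefixSums) : s ≤ l.sum := by
  induction l generalizing s with
  | nil => simp at hs
  | cons a l ih =>
    simp only [prefixSums_cons, mem_insert, mem_image] at hs
    rcases hs with rfl | ⟨s, hs, rfl⟩
    · simp
    · simpa using ih hs

lemma head_le_of_mem_prefixSums {a s : ℕ} {l : List ℕ} (hs : s ∈ (a :: l).prefixSums) :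
    a ≤ s := by
  simp only [prefixSums_cons, mem_insert, mem_image] at hs
  rcases hs with rfl | ⟨b, _, rfl⟩ <;> omega

lemma pos_of_mem_prefixSums {l : List ℕ} (hl : ∀ z ∈ l, 0 < z) {s : ℕ}
    (hs : s ∈ l.prefixSums) : 0 < s := by
  cases l with
  | nil => simp at hs
  | cons a l => exact (hl a mem_cons_self).trans_le (head_le_of_mem_prefixSums hs)

lemma sum_mem_prefixSums {l : List ℕ} (hl : l ≠ []) : l.sum ∈ l.prefixSums := by
  induction l with
  | nil => contradiction
  | cons a l ih =>
    rcases eq_or_ne l [] with rfl | h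
    · simp
    · simp only [prefixSums_cons, sum_cons, Finset.mem_insert, Finset.mem_image]
      exact Or.inr ⟨l.sum, ih h, rfl⟩

lemma prefixSums_append (l₁ l₂ : List ℕ) :
    (l₁ ++ l₂).prefixSums = l₁.prefixSums ∪ l₂.prefixSums.image (l₁.sum + ·) := by
  induction l₁ with
  | nil => simp
  | cons a l ih =>
    rw [cons_append, prefixSums_cons, ih, image_union, image_image, prefixSums_cons,
      insert_union, sum_cons]
    congr 3
    funext s
    simp [add_assoc]

lemma mem_prefixSums_iff {l : List ℕ} {s : ℕ} :
    s ∈ l.prefixSums ↔ ∃ l₁ l₂, l = l₁ ++ l₂ ∧ l₁ ≠ [] ∧ l₁.sum = s := by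
  constructor
  · intro hs
    induction l generalizing s with
    | nil => simp at hs
    | cons a l ih =>
      simp only [prefixSums_cons, mem_insert, mem_image] at hs
      rcases hs with rfl | ⟨s, hs, rfl⟩
      · exact ⟨[s], l, rfl, cons_ne_nil _ _, by simp⟩
      · obtain ⟨l₁, l₂, rfl, hne, rfl⟩ := ih hs
        exact ⟨a :: l₁, l₂, rfl, cons_ne_nil _ _, by simp⟩
  · rintro ⟨l₁, l₂, rfl, hne, rfl⟩
    rw [prefixSums_append]
    exact Finset.mem_union_left _ (sum_mem_prefixSums hne)

lemma prefixSums_cons_erase {a : ℕ} {l : List ℕ} (hl : ∀ z ∈ l, 0 < z) :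
    (a :: l).prefixSums.erase a = l.prefixSums.image (a + ·) := by
  rw [prefixSums_cons, erase_insert]
  simp only [mem_image, not_exists, not_and]
  intro s hs
  have := pos_of_mem_prefixSums hl hs
  omega

lemma prefixSums_injOn : Set.InjOn prefixSums {l | ∀ z ∈ l, 0 < z} := by
  intro x hx y hy h
  induction x generalizing y with
  | nil => exact (prefixSums_eq_empty.1 h.symm).symm
  | cons a x ih =>
    cases y with
    | nil => simp at h
    | cons b y =>
      have ha : a ∈ (b :: y).prefixSums := h ▸ Finset.mem_insert_self a _
      have hb : b ∈ (a :: x).prefixSums := h ▸ Finset.mem_insert_self b _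
      obtain rfl : a = b :=
        le_antisymm (head_le_of_mem_prefixSums hb) (head_le_of_mem_prefixSums ha)
      have hx' : ∀ z ∈ x, 0 < z := fun z hz => hx z (mem_cons_of_mem _ hz)
      have hy' : ∀ z ∈ y, 0 < z := fun z hz => hy z (mem_cons_of_mem _ hz)
      have himage := congrArg (·.erase a) h
      simp only [prefixSums_cons_erase hx', prefixSums_cons_erase hy'] at himage
      rw [ih hx' hy' (image_injective (add_right_injective a) himage)]

end List

lemma CompLE.prefixSums_subset {x y : List ℕ} (h : CompLE x y) :
    x.prefixSums ⊆ y.prefixSums := by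
  obtain ⟨L, hL, rfl, rfl⟩ := h
  induction L with
  | nil => simp
  | cons l L ih =>
    rw [List.map_cons, List.flatten_cons, List.prefixSums_cons, List.prefixSums_append]
    refine insert_subset (mem_union_left _ (List.sum_mem_prefixSums (hL l List.mem_cons_self))) ?_
    exact (image_subset_image (ih fun b hb => hL b (List.mem_cons_of_mem _ hb))).trans
      subset_union_right

lemma compLE_of_prefixSums_subset {x y : List ℕ} (hx : ∀ z ∈ x, 0 < z) (hy : ∀ z ∈ y, 0 < z)
    (hsum : x.sum = y.sum) (h : x.prefixSums ⊆ y.prefixSums) : CompLE x y := by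
  induction x generalizing y with
  | nil =>
    obtain rfl : y = [] := List.eq_nil_iff_forall_not_mem.2 fun z hz => by
      have := List.le_sum_of_mem hz
      have := hy z hz
      simp only [List.sum_nil] at hsum
      omega
    exact ⟨[], by simp, rfl, rfl⟩
  | cons a x ih =>
    obtain ⟨y₁, y₂, rfl, hy₁, hsum₁⟩ := List.mem_prefixSums_iff.1 (h (mem_insert_self a _))
    have hx' : ∀ z ∈ x, 0 < z := fun z hz => hx z (List.mem_cons_of_mem _ hz)
    have h₂ : x.prefixSums ⊆ y₂.prefixSums := by
      intro s hs
      have hmem := h (mem_insert_of_mem (mem_image_of_mem _ hs))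
      rw [List.prefixSums_append, hsum₁] at hmem
      have := List.pos_of_mem_prefixSums hx' hs
      rcases mem_union.1 hmem with h₁ | h₂
      · have := List.le_sum_of_mem_prefixSums h₁
        omega
      · obtain ⟨c, hc, hcs⟩ := mem_image.1 h₂
        rwa [show s = c by omega]
    obtain ⟨L, hL, hflat, hmap⟩ := ih hx' (fun z hz => hy z (List.mem_append_right _ hz))
      (by simp only [List.sum_cons, List.sum_append] at hsum; omega) h₂
    exact ⟨y₁ :: L, List.forall_mem_cons.2 ⟨hy₁, hL⟩, by simp [hflat], by simp [hmap, hsum₁]⟩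

lemma compLE_iff_prefixSums_subset {n : ℕ} {x y : List ℕ} (hx : IsComp n x)
    (hy : IsComp n y) : CompLE x y ↔ x.prefixSums ⊆ y.prefixSums :=
  ⟨CompLE.prefixSums_subset, compLE_of_prefixSums_subset hx.1 hy.1 (hx.2.trans hy.2.symm)⟩

def consecutiveDiffs : ℕ → List ℕ → List ℕ
  | _, [] => []
  | p, a :: l => (a - p) :: consecutiveDiffs a l

lemma pos_of_mem_consecutiveDiffs {p : ℕ} {l : List ℕ} (hl : (p :: l).Pairwise (· < ·))
    {z : ℕ} (hz : z ∈ consecutiveDiffs p l) : 0 < z := by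
  induction l generalizing p with
  | nil => simp [consecutiveDiffs] at hz
  | cons a l ih =>
    rw [List.pairwise_cons] at hl
    rcases List.mem_cons.1 hz with rfl | hz
    · have := hl.1 a List.mem_cons_self
      omega
    · exact ih hl.2 hz

lemma prefixSums_consecutiveDiffs {p : ℕ} {l : List ℕ} (hl : (p :: l).Pairwise (· < ·)) :
    (consecutiveDiffs p l).prefixSums = l.toFinset.image (· - p) := by
  induction l generalizing p with
  | nil => rfl
  | cons a l ih =>
    rw [List.pairwise_cons] at hl
    have hpa := hl.1 a List.mem_cons_self
    have hal : ∀ c ∈ l, a < c := (List.pairwise_cons.1 hl.2).1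
    rw [consecutiveDiffs, List.prefixSums_cons, ih hl.2, image_image, List.toFinset_cons,
      image_insert]
    congr 1
    refine image_congr fun c hc => ?_
    have := hal c (List.mem_toFinset.1 hc)
    simp only [Function.comp_apply]
    omega

def ofPrefixSums (s : Finset ℕ) : List ℕ := consecutiveDiffs 0 (s.sort (· ≤ ·))

lemma pairwise_zero_cons_sort {s : Finset ℕ} (hs : ∀ a ∈ s, 0 < a) :
    (0 :: s.sort (· ≤ ·)).Pairwise (· < ·) :=
  List.pairwise_cons.2 ⟨fun a ha => hs a ((mem_sort _).1 ha), (s.sortedLT_sort).pairwise⟩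

lemma pos_of_mem_ofPrefixSums {s : Finset ℕ} (hs : ∀ a ∈ s, 0 < a) :
    ∀ z ∈ ofPrefixSums s, 0 < z := fun _ =>
  pos_of_mem_consecutiveDiffs (pairwise_zero_cons_sort hs)

lemma prefixSums_ofPrefixSums {s : Finset ℕ} (hs : ∀ a ∈ s, 0 < a) :
    (ofPrefixSums s).prefixSums = s := by
  simp [ofPrefixSums, prefixSums_consecutiveDiffs (pairwise_zero_cons_sort hs)]

lemma isComp_ofPrefixSums {n : ℕ} {s : Finset ℕ} (hs : s ⊆ Icc 1 n) (hn : n ∈ s) :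
    IsComp n (ofPrefixSums s) := by
  have hpos : ∀ a ∈ s, 0 < a := fun a ha => (mem_Icc.1 (hs ha)).1
  have hsums := prefixSums_ofPrefixSums hpos
  have hne : ofPrefixSums s ≠ [] := by
    rintro h
    rw [← hsums, h] at hn
    simp at hn
  refine ⟨pos_of_mem_ofPrefixSums hpos, ?_⟩
  have hle := List.le_sum_of_mem_prefixSums (hsums ▸ hn)
  have hge := (mem_Icc.1 (hs (hsums ▸ List.sum_mem_prefixSums hne))).2
  omega

lemma IsComp.prefixSums_subset_Icc {n : ℕ} {x : List ℕ} (hx : IsComp n x) :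
    x.prefixSums ⊆ Icc 1 n := fun _ hs =>
  mem_Icc.2 ⟨List.pos_of_mem_prefixSums hx.1 hs, hx.2 ▸ List.le_sum_of_mem_prefixSums hs⟩

lemma IsComp.mem_prefixSums {n : ℕ} {x : List ℕ} (hx : IsComp n x) (hn : 0 < n) :
    n ∈ x.prefixSums := by
  have hne : x ≠ [] := by
    rintro rfl
    simp [IsComp] at hx
    omega
  exact hx.2 ▸ List.sum_mem_prefixSums hne

def prefixSumsEquiv (n : ℕ) : {x // IsComp (n + 1) x} ≃ {σ : Finset ℕ // σ ⊆ Icc 1 n} where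
  toFun x := ⟨x.1.prefixSums.erase (n + 1), fun s hs => by
    have := x.2.prefixSums_subset_Icc (mem_of_mem_erase hs)
    simp only [mem_Icc, mem_erase] at this hs ⊢
    omega⟩
  invFun σ := ⟨ofPrefixSums (insert (n + 1) σ.1), isComp_ofPrefixSums
    (insert_subset (by simp) (σ.2.trans (Icc_subset_Icc_right n.le_succ))) (mem_insert_self _ _)⟩
  left_inv x := Subtype.ext <| by
    have hpos : ∀ a ∈ x.1.prefixSums, 0 < a := fun _ => List.pos_of_mem_prefixSums x.2.1
    change ofPrefixSums (insert (n + 1) (x.1.prefixSums.erase (n + 1))) = x.1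
    rw [insert_erase (x.2.mem_prefixSums n.succ_pos)]
    exact List.prefixSums_injOn (pos_of_mem_ofPrefixSums hpos) x.2.1 (prefixSums_ofPrefixSums hpos)
  right_inv σ := Subtype.ext <| by
    have hpos : ∀ a ∈ insert (n + 1) σ.1, 0 < a :=
      forall_mem_insert _ _ _ |>.2 ⟨n.succ_pos, fun _ ha => (mem_Icc.1 (σ.2 ha)).1⟩
    change (ofPrefixSums (insert (n + 1) σ.1)).prefixSums.erase (n + 1) = σ.1
    rw [prefixSums_ofPrefixSums hpos, erase_insert fun h => by simpa using σ.2 h]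

@[simp]
lemma prefixSumsEquiv_apply_coe {n : ℕ} (x : {x // IsComp (n + 1) x}) :
    (prefixSumsEquiv n x).1 = x.1.prefixSums.erase (n + 1) := rfl

lemma prefixSumsEquiv_subset_iff {n : ℕ} (x y : {x // IsComp (n + 1) x}) :
    (prefixSumsEquiv n x).1 ⊆ (prefixSumsEquiv n y).1 ↔ CompLE x.1 y.1 := by
  rw [prefixSumsEquiv_apply_coe, prefixSumsEquiv_apply_coe, compLE_iff_prefixSums_subset x.2 y.2,
    ← insert_subset_insert_iff (notMem_erase _ _),
    insert_erase (x.2.mem_prefixSums n.succ_pos), insert_erase (y.2.mem_prefixSums n.succ_pos)]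

def hook (a b : ℕ) : List ℕ := List.replicate a 1 ++ 3 :: List.replicate b 1

lemma prefixSums_replicate_one (a : ℕ) : (List.replicate a 1).prefixSums = Icc 1 a := by
  induction a with
  | zero => rfl
  | succ a ih =>
    ext s
    simp only [List.replicate_succ, List.prefixSums_cons, ih, mem_insert, mem_image, mem_Icc]
    constructor
    · rintro (rfl | ⟨c, hc, rfl⟩) <;> omega
    · intro hs
      rcases eq_or_lt_of_le hs.1 with h | h
      · exact Or.inl h.symm
      · exact Or.inr ⟨s - 1, by omega, by omega⟩

lemma prefixSums_hook (a b : ℕ) :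
    (hook a b).prefixSums = Icc 1 (a + b + 3) \ {a + 1, a + 2} := by
  ext s
  simp only [hook, List.prefixSums_append, List.prefixSums_cons, prefixSums_replicate_one,
    List.sum_replicate, smul_eq_mul, mul_one, mem_union, mem_image, mem_insert, mem_Icc,
    mem_sdiff, mem_singleton]
  constructor
  · rintro (h | ⟨c, rfl | ⟨d, hd, rfl⟩, rfl⟩) <;> omega
  · rintro ⟨hs, hne⟩
    by_cases h : s ≤ a
    · exact Or.inl ⟨hs.1, h⟩
    · by_cases h' : s = a + 3
      · exact Or.inr ⟨3, Or.inl rfl, h'.symm⟩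
      · exact Or.inr ⟨s - a, Or.inr ⟨s - a - 3, by omega, by omega⟩, by omega⟩

lemma isComp_hook (a b : ℕ) : IsComp (a + b + 3) (hook a b) := by
  refine ⟨fun z hz => ?_, ?_⟩
  · simp only [hook, List.mem_append, List.mem_cons, List.mem_replicate] at hz
    omega
  · simp only [hook, List.sum_append, List.sum_cons, List.sum_replicate, smul_eq_mul, mul_one]
    omega

lemma coe_hook (a b : ℕ) :
    (hook a b : Multiset ℕ) = 3 ::ₘ Multiset.replicate (a + b) 1 := by
  rw [hook, ← Multiset.coe_add, ← Multiset.cons_coe, Multiset.coe_replicate,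
    Multiset.coe_replicate, Multiset.add_cons, Multiset.replicate_add]

lemma exists_eq_hook_of_coe_eq {t : ℕ} {y : List ℕ}
    (h : (y : Multiset ℕ) = 3 ::ₘ Multiset.replicate t 1) :
    ∃ a b, a + b = t ∧ y = hook a b := by
  obtain ⟨y₁, y₂, rfl⟩ := List.append_of_mem (show 3 ∈ y by simpa using congrArg (3 ∈ ·) h)
  have hm : ((y₁ ++ y₂ : List ℕ) : Multiset ℕ) = Multiset.replicate t 1 := by
    rw [← Multiset.cons_inj_right 3, Multiset.cons_coe, ← h]
    exact Multiset.coe_eq_coe.2 List.perm_middle.symm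
  have hones : ∀ z ∈ y₁ ++ y₂, z = 1 := fun z hz =>
    Multiset.eq_of_mem_replicate (hm ▸ Multiset.mem_coe.2 hz)
  refine ⟨y₁.length, y₂.length, by simpa using congrArg Multiset.card hm, ?_⟩
  rw [hook, ← List.eq_replicate_of_mem fun z hz => hones z (List.mem_append_left _ hz),
    ← List.eq_replicate_of_mem fun z hz => hones z (List.mem_append_right _ hz)]

lemma exists_hook_compLE_iff {t : ℕ} {x : List ℕ} (hx : IsComp (t + 3) x) :
    (∃ y, IsComp (t + 3) y ∧ (y : Multiset ℕ) = 3 ::ₘ Multiset.replicate t 1 ∧ CompLE x y) ↔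
      ∃ i ∈ Icc 1 (t + 1), i ∉ x.prefixSums ∧ i + 1 ∉ x.prefixSums := by
  constructor
  · rintro ⟨y, hy, hcoe, hxy⟩
    obtain ⟨a, b, rfl, rfl⟩ := exists_eq_hook_of_coe_eq hcoe
    have hsub := (compLE_iff_prefixSums_subset hx hy).1 hxy
    rw [prefixSums_hook] at hsub
    exact ⟨a + 1, by simp only [mem_Icc]; omega, fun h => by simpa using hsub h,
      fun h => by simpa using hsub h⟩
  · rintro ⟨i, hi, hi₁, hi₂⟩
    rw [mem_Icc] at hi
    have hy := isComp_hook (i - 1) (t + 1 - i)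
    rw [show i - 1 + (t + 1 - i) + 3 = t + 3 by omega] at hy
    refine ⟨hook (i - 1) (t + 1 - i), hy,
      by rw [coe_hook, show i - 1 + (t + 1 - i) = t by omega], ?_⟩
    rw [compLE_iff_prefixSums_subset hx hy, prefixSums_hook]
    intro s hs
    have hs₁ : s ≠ i := fun h => hi₁ (h ▸ hs)
    have hs₂ : s ≠ i + 1 := fun h => hi₂ (h ▸ hs)
    have := hx.prefixSums_subset_Icc hs
    simp only [mem_sdiff, mem_Icc, mem_insert, mem_singleton] at this ⊢
    omega

/-- For `λ = (3, 1^t)` and `n = t + 3`, the poset `D_λ` of compositions of `n` lying below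
some composition of type `λ` is isomorphic to the face poset (including the empty face) of
the complex on `{1,...,t+2}` whose faces are the subsets `σ` avoiding some pair `{i, i+1}`,
`1 ≤ i ≤ t+1`; i.e. `δ_{(3,1^t)}` is isomorphic to that complex. -/
theorem stmt8 (t : ℕ) :
    ∃ e : {x : List ℕ // IsComp (t + 3) x ∧ ∃ y : List ℕ, IsComp (t + 3) y ∧
            (↑y : Multiset ℕ) = 3 ::ₘ Multiset.replicate t 1 ∧ CompLE x y} ≃
          {σ : Finset ℕ // σ ⊆ Finset.Icc 1 (t + 2) ∧
            ∃ i ∈ Finset.Icc 1 (t + 1), i ∉ σ ∧ i + 1 ∉ σ},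
      ∀ a b, CompLE a.1 b.1 ↔ (e a).1 ⊆ (e b).1 := by
  have hfaces (x : {x // IsComp (t + 3) x}) :
      (∃ y, IsComp (t + 3) y ∧ (y : Multiset ℕ) = 3 ::ₘ Multiset.replicate t 1 ∧ CompLE x.1 y) ↔
        ∃ i ∈ Icc 1 (t + 1), i ∉ (prefixSumsEquiv (t + 2) x).1 ∧
          i + 1 ∉ (prefixSumsEquiv (t + 2) x).1 := by
    rw [exists_hook_compLE_iff x.2]
    refine exists_congr fun i => and_congr_right fun hi => ?_
    rw [mem_Icc] at hi
    simp only [prefixSumsEquiv_apply_coe, mem_erase, ne_eq, show i ≠ t + 3 by omega,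
      show i + 1 ≠ t + 3 by omega, not_false_eq_true, true_and]
  exact ⟨(Equiv.subtypeSubtypeEquivSubtypeInter _ _).symm.trans
    (((prefixSumsEquiv (t + 2)).subtypeEquiv hfaces).trans
      (Equiv.subtypeSubtypeEquivSubtypeInter _ _)),
    fun a b => (prefixSumsEquiv_subset_iff ⟨a.1, a.2.1⟩ ⟨b.1, b.2.1⟩).symm⟩
end

section
/- Let K_t be the complex on {1,...,t+2} whose faces are subsets σ such that some i ∈ {1,...,t+1} satisfies i ∉ σ and i+1 ∉ σ. Then the geometric realization of K_t is homotopy equivalent to S^{2m−1} if t = 3m, to S^{2m} if t = 3m+1, and is contractible if t = 3m+2. -/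
/-!
If every face through a vertex `v` stays a face after adding another vertex `w`, the straight-line
homotopy that moves the weight of `v` onto `w` deformation retracts `|K|` onto `|K - v|`
(the fold lemma). In `K_t` the vertex `3j + 2` is dominated in this sense by `3j + 1` once
`2, 5, …, 3j - 1` are deleted, so all of `2, 5, 8, …` fold away; for `t ≢ 1 (mod 3)` one more fold
follows. The deleted vertices then either form an independent dominating set of the path
`1, …, t + 2`, and the remaining complex is the boundary of the simplex on the other vertices, or
they contain the edge `{1, 2}`, and it is a full simplex. The boundary of a simplex on `d + 1`
vertices is the frontier of a bounded convex body in `ℝ^d`, hence a sphere `S^{d-1}`; a full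
simplex is convex, hence contractible.
-/

/-- A face of the complex `K_t` on `{1,...,t+2}`: a subset avoiding some pair `{i, i+1}`
with `1 ≤ i ≤ t+1` entirely. -/
def KFace (t : ℕ) (σ : Finset ℕ) : Prop :=
  σ ⊆ Finset.Icc 1 (t + 2) ∧ ∃ i ∈ Finset.Icc 1 (t + 1), i ∉ σ ∧ i + 1 ∉ σ

open Finset
open scoped ContinuousMap

variable {α : Type*}

section Fold

variable [DecidableEq α]

def deleteVertex (K : Set (Finset α)) (v : α) : Set (Finset α) := {σ | σ ∈ K ∧ v ∉ σ}

def Dominates (K : Set (Finset α)) (w v : α) : Prop := ∀ σ ∈ K, v ∈ σ → insert w σ ∈ K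

lemma geomReal_mono {K L : Set (Finset α)} (h : K ⊆ L) : geomReal K ⊆ geomReal L :=
  fun _ ⟨hx, σ, hσ, hsupp⟩ => ⟨hx, σ, h hσ, hsupp⟩

lemma geomReal_deleteVertex_subset (K : Set (Finset α)) (v : α) :
    geomReal (deleteVertex K v) ⊆ geomReal K :=
  geomReal_mono fun _ hσ => hσ.1

lemma apply_eq_zero_of_mem_geomReal_deleteVertex {K : Set (Finset α)} {v : α} {x : α → ℝ}
    (hx : x ∈ geomReal (deleteVertex K v)) : x v = 0 := by
  obtain ⟨-, σ, ⟨-, hvσ⟩, hsupp, -⟩ := hx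
  exact not_not.mp (mt (hsupp v) hvσ)

def moveMass (v w : α) (c : ℝ) (x : α → ℝ) : α → ℝ :=
  x + (c * x v) • (Pi.single w 1 - Pi.single v 1)

lemma moveMass_zero (v w : α) (x : α → ℝ) : moveMass v w 0 x = x := by
  simp [moveMass]

lemma moveMass_of_apply_eq_zero {v : α} (w : α) (c : ℝ) {x : α → ℝ} (hx : x v = 0) :
    moveMass v w c x = x := by
  simp [moveMass, hx]

lemma moveMass_apply (v w : α) (c : ℝ) (x : α → ℝ) (i : α) :
    moveMass v w c x i =
      x i + (if i = w then c * x v else 0) - (if i = v then c * x v else 0) := by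
  simp only [moveMass, Pi.add_apply, Pi.smul_apply, Pi.sub_apply, Pi.single_apply, smul_eq_mul]
  split_ifs <;> simp_all [sub_eq_add_neg]

@[fun_prop]
lemma Continuous.moveMass {X : Type*} [TopologicalSpace X] (v w : α) {c : X → ℝ}
    {f : X → α → ℝ} (hc : Continuous c) (hf : Continuous f) :
    Continuous fun p => _root_.moveMass v w (c p) (f p) := by
  unfold _root_.moveMass
  fun_prop

lemma moveMass_mem_geomReal {K : Set (Finset α)} {v w : α} (hvw : v ≠ w)
    (hdom : Dominates K w v) {x : α → ℝ} (hx : x ∈ geomReal K) {c : ℝ} (hc₀ : 0 ≤ c)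
    (hc₁ : c ≤ 1) : moveMass v w c x ∈ geomReal K := by
  obtain ⟨hpos, σ, hσ, hsupp, hsum⟩ := hx
  by_cases hv : v ∈ σ
  swap
  · rw [moveMass_of_apply_eq_zero w c (not_not.mp (mt (hsupp v) hv))]
    exact ⟨hpos, σ, hσ, hsupp, hsum⟩
  have hxw : w ∉ σ → x w = 0 := fun hw => not_not.mp (mt (hsupp w) hw)
  refine ⟨fun i => ?_, insert w σ, hdom σ hσ hv, fun i hi => ?_, ?_⟩
  · rw [moveMass_apply]
    have := hpos i
    have := hpos v
    split_ifs <;> subst_vars <;> nlinarith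
  · rw [moveMass_apply] at hi
    by_cases hiw : i = w
    · exact hiw ▸ mem_insert_self _ _
    by_cases hiv : i = v
    · exact mem_insert_of_mem (hiv ▸ hv)
    exact mem_insert_of_mem (hsupp i (by simpa [hiw, hiv] using hi))
  · have hsum' : ∑ i ∈ insert w σ, x i = 1 := by
      by_cases hw : w ∈ σ
      · rwa [insert_eq_of_mem hw]
      · rw [sum_insert hw, hxw hw, zero_add, hsum]
    simp only [moveMass, Pi.add_apply, Pi.smul_apply, Pi.sub_apply, smul_eq_mul]
    rw [sum_add_distrib, ← mul_sum, sum_sub_distrib, sum_pi_single', sum_pi_single',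
      if_pos (mem_insert_self w σ), if_pos (mem_insert_of_mem hv), hsum']
    ring

lemma moveMass_one_mem_geomReal_deleteVertex {K : Set (Finset α)} (hK : IsLowerSet K) {v w : α}
    (hvw : v ≠ w) (hdom : Dominates K w v) {x : α → ℝ} (hx : x ∈ geomReal K) :
    moveMass v w 1 x ∈ geomReal (deleteVertex K v) := by
  obtain ⟨hpos, σ, hσ, hsupp, hsum⟩ := moveMass_mem_geomReal hvw hdom hx zero_le_one le_rfl
  have hv : moveMass v w 1 x v = 0 := by simp [moveMass_apply, hvw]
  refine ⟨hpos, σ.erase v, ⟨hK (erase_subset v σ) hσ, notMem_erase v σ⟩, fun i hi => ?_, ?_⟩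
  · exact mem_erase.mpr ⟨fun h => hi (h ▸ hv), hsupp i hi⟩
  · rwa [sum_erase _ hv]

noncomputable def foldHomotopyEquiv {K : Set (Finset α)} (hK : IsLowerSet K) {v w : α}
    (hvw : v ≠ w) (hdom : Dominates K w v) :
    geomReal K ≃ₕ geomReal (deleteVertex K v) where
  toFun := ⟨fun x => ⟨moveMass v w 1 x, moveMass_one_mem_geomReal_deleteVertex hK hvw hdom x.2⟩,
    by fun_prop⟩
  invFun := ⟨Set.inclusion (geomReal_deleteVertex_subset K v), continuous_inclusion _⟩
  left_inv := by
    refine ⟨.symm ⟨⟨fun p => ⟨moveMass v w p.1 p.2,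
      moveMass_mem_geomReal hvw hdom p.2.2 p.1.2.1 p.1.2.2⟩, ?_⟩, ?_, ?_⟩⟩
    · fun_prop
    · exact fun x => Subtype.ext (moveMass_zero v w x)
    · exact fun x => rfl
  right_inv := by
    convert ContinuousMap.Homotopic.refl _
    ext x : 2
    exact (moveMass_of_apply_eq_zero w 1 (apply_eq_zero_of_mem_geomReal_deleteVertex x.2)).symm

end Fold

section Simplex

-- As complexes, `Set.Iic V` is the full simplex on `V` and `Set.Iio V` is its boundary.
variable [DecidableEq α] {V : Finset α} {x : α → ℝ}

lemma mem_geomReal_Iic :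
    x ∈ geomReal (Set.Iic V) ↔ (∀ i, 0 ≤ x i) ∧ (∀ i ∉ V, x i = 0) ∧ ∑ i ∈ V, x i = 1 := by
  constructor
  · rintro ⟨hx, σ, hσV, hsupp, hsum⟩
    have hzero : ∀ i ∉ σ, x i = 0 := fun i hi => not_not.mp (mt (hsupp i) hi)
    refine ⟨hx, fun i hi => hzero i (mt (@hσV i) hi), ?_⟩
    rwa [← sum_subset hσV fun i _ hi => hzero i hi]
  · rintro ⟨hx, hzero, hsum⟩
    exact ⟨hx, V, Set.mem_Iic.mpr le_rfl, fun i hi => not_not.mp (mt (hzero i) hi), hsum⟩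

lemma mem_geomReal_Iio :
    x ∈ geomReal (Set.Iio V) ↔ x ∈ geomReal (Set.Iic V) ∧ ∃ v ∈ V, x v = 0 := by
  constructor
  · intro hx
    refine ⟨geomReal_mono Set.Iio_subset_Iic_self hx, ?_⟩
    obtain ⟨-, σ, hσV, hsupp, -⟩ := hx
    obtain ⟨v, hvV, hvσ⟩ := exists_of_ssubset hσV
    exact ⟨v, hvV, not_not.mp (mt (hsupp v) hvσ)⟩
  · rintro ⟨hx, v, hvV, hxv⟩
    obtain ⟨hpos, hzero, hsum⟩ := mem_geomReal_Iic.mp hx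
    refine ⟨hpos, V.erase v, erase_ssubset hvV, fun i hi => mem_erase.mpr ⟨?_, ?_⟩, ?_⟩
    · exact fun h => hi (h ▸ hxv)
    · exact not_not.mp (mt (hzero i) hi)
    · rwa [sum_erase V hxv]

lemma convex_geomReal_Iic : Convex ℝ (geomReal (Set.Iic V)) := by
  intro x hx y hy a b ha hb hab
  rw [mem_geomReal_Iic] at hx hy ⊢
  refine ⟨fun i => ?_, fun i hi => ?_, ?_⟩
  · simp only [Pi.add_apply, Pi.smul_apply, smul_eq_mul]
    have := hx.1 i
    have := hy.1 i
    positivity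
  · simp [hx.2.1 i hi, hy.2.1 i hi]
  · simp only [Pi.add_apply, Pi.smul_apply, smul_eq_mul]
    rw [sum_add_distrib, ← mul_sum, ← mul_sum, hx.2.2, hy.2.2, mul_one, mul_one, hab]

lemma contractibleSpace_geomReal_Iic (hV : V.Nonempty) :
    ContractibleSpace (geomReal (Set.Iic V)) := by
  obtain ⟨v, hv⟩ := hV
  refine convex_geomReal_Iic.contractibleSpace ⟨Pi.single v 1, mem_geomReal_Iic.mpr ⟨?_, ?_, ?_⟩⟩
  · intro i
    rw [Pi.single_apply]
    positivity
  · intro i hi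
    exact Pi.single_eq_of_ne (ne_of_mem_of_not_mem hv hi).symm 1
  · rw [sum_pi_single', if_pos hv]

end Simplex

section CornerSimplex

variable {d : ℕ}

def cornerSimplex (d : ℕ) : Set (EuclideanSpace ℝ (Fin d)) :=
  {u | (∀ j, 0 ≤ u j) ∧ ∑ j, u j ≤ 1}

lemma isClosed_cornerSimplex : IsClosed (cornerSimplex d) := by
  simp only [cornerSimplex, Set.ofPred_and, Set.ofPred_forall]
  exact (isClosed_iInter fun j => isClosed_le continuous_const (by fun_prop)).inter
    (isClosed_le (by fun_prop) continuous_const)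

lemma convex_cornerSimplex : Convex ℝ (cornerSimplex d) := by
  rintro u ⟨hu, hu₁⟩ v ⟨hv, hv₁⟩ a b ha hb hab
  refine ⟨fun j => ?_, ?_⟩
  · simp only [PiLp.add_apply, PiLp.smul_apply, smul_eq_mul]
    have := hu j
    have := hv j
    positivity
  · simp only [PiLp.add_apply, PiLp.smul_apply, smul_eq_mul]
    rw [sum_add_distrib, ← mul_sum, ← mul_sum]
    nlinarith

lemma cornerSimplex_subset_closedBall : cornerSimplex d ⊆ Metric.closedBall 0 1 := by
  rintro u ⟨hu, hu₁⟩
  have hle : ∀ j, u j ≤ 1 := fun j =>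
    (single_le_sum (fun k _ => hu k) (mem_univ j)).trans hu₁
  rw [mem_closedBall_zero_iff, EuclideanSpace.norm_eq, Real.sqrt_le_one]
  calc ∑ j, ‖u j‖ ^ 2 ≤ ∑ j, u j := sum_le_sum fun j _ => by
        rw [Real.norm_of_nonneg (hu j)]; nlinarith [hu j, hle j]
    _ ≤ 1 := hu₁

lemma isOpen_setOf_pos_sum_lt_one :
    IsOpen {u : EuclideanSpace ℝ (Fin d) | (∀ j, 0 < u j) ∧ ∑ j, u j < 1} := by
  simp only [Set.ofPred_and, Set.ofPred_forall]
  exact (isOpen_iInter_of_finite fun j => isOpen_lt continuous_const (by fun_prop)).inter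
    (isOpen_lt (by fun_prop) continuous_const)

lemma add_smul_single_mem_cornerSimplex {u : EuclideanSpace ℝ (Fin d)}
    (hu : u ∈ interior (cornerSimplex d)) :
    ∃ ε : ℝ, 0 < ε ∧
      ∀ j (δ : ℝ), |δ| < ε → u + δ • EuclideanSpace.single j (1 : ℝ) ∈ cornerSimplex d := by
  obtain ⟨ε, hε, hball⟩ := Metric.mem_nhds_iff.mp (mem_interior_iff_mem_nhds.mp hu)
  refine ⟨ε, hε, fun j δ hδ => hball ?_⟩
  rwa [Metric.mem_ball, dist_eq_norm, add_sub_cancel_left, norm_smul,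
    PiLp.norm_single, norm_one, mul_one, Real.norm_eq_abs]

lemma interior_cornerSimplex :
    interior (cornerSimplex d) = {u | (∀ j, 0 < u j) ∧ ∑ j, u j < 1} := by
  refine subset_antisymm (fun u hu => ?_) (interior_maximal
    (fun u hu => ⟨fun j => (hu.1 j).le, hu.2.le⟩) isOpen_setOf_pos_sum_lt_one)
  obtain ⟨ε, hε, hmem⟩ := add_smul_single_mem_cornerSimplex hu
  have hshift : ∀ j (δ : ℝ), |δ| < ε → 0 ≤ u j + δ ∧ ∑ k, u k + δ ≤ 1 := fun j δ hδ => by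
    obtain ⟨hpos, hsum⟩ := hmem j δ hδ
    have := hpos j
    simp only [PiLp.add_apply, PiLp.smul_apply, sum_add_distrib, ← smul_sum] at this hsum
    simpa using And.intro this hsum
  have hε' : |ε / 2| < ε := by rw [abs_of_pos (half_pos hε)]; exact half_lt_self hε
  have hε'' : |-(ε / 2)| < ε := by rwa [abs_neg]
  refine ⟨fun j => by linarith [(hshift j _ hε'').1], ?_⟩
  by_contra! hsum
  obtain ⟨j, -, -⟩ := exists_ne_zero_of_sum_ne_zero (by linarith : ∑ k, u k ≠ 0)
  linarith [(hshift j _ hε').2]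

lemma frontier_cornerSimplex :
    frontier (cornerSimplex d) =
      {u | (∀ j, 0 ≤ u j) ∧ ∑ j, u j ≤ 1 ∧ ((∃ j, u j = 0) ∨ ∑ j, u j = 1)} := by
  ext u
  rw [frontier, isClosed_cornerSimplex.closure_eq, interior_cornerSimplex]
  simp only [cornerSimplex, Set.mem_sdiff, Set.mem_ofPred_eq, not_and_or, not_forall, not_lt]
  constructor
  · rintro ⟨⟨hu, hu₁⟩, ⟨j, hj⟩ | hsum⟩
    · exact ⟨hu, hu₁, .inl ⟨j, le_antisymm hj (hu j)⟩⟩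
    · exact ⟨hu, hu₁, .inr (le_antisymm hu₁ hsum)⟩
  · rintro ⟨hu, hu₁, ⟨j, hj⟩ | hsum⟩
    · exact ⟨⟨hu, hu₁⟩, .inl ⟨j, hj.le⟩⟩
    · exact ⟨⟨hu, hu₁⟩, .inr hsum.ge⟩

lemma interior_cornerSimplex_nonempty : (interior (cornerSimplex d)).Nonempty := by
  refine ⟨WithLp.toLp 2 fun _ => ((d : ℝ) + 1)⁻¹, ?_⟩
  rw [interior_cornerSimplex]
  refine ⟨fun j => by simp only; positivity, ?_⟩
  simp only [sum_const, card_univ, Fintype.card_fin, nsmul_eq_mul]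
  rw [← div_eq_mul_inv, div_lt_one (by positivity)]
  linarith

noncomputable def frontierCornerSimplexHomeomorphSphere (d : ℕ) :
    frontier (cornerSimplex d) ≃ₜ Metric.sphere (0 : EuclideanSpace ℝ (Fin d)) 1 :=
  have h := exists_homeomorph_image_interior_closure_frontier_eq_unitBall convex_cornerSimplex
    interior_cornerSimplex_nonempty
    (Metric.isBounded_closedBall.subset cornerSimplex_subset_closedBall)
  (h.choose.image _).trans (.setCongr h.choose_spec.2.2)

end CornerSimplex

section BoundaryHomeomorph

variable {d : ℕ}

/-- Barycentric coordinates with respect to the vertices `e₁, …, e_d, 0` of `cornerSimplex d`. -/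
def baryCoords (u : EuclideanSpace ℝ (Fin d)) : Fin (d + 1) → ℝ :=
  Fin.snoc (fun j => u j) (1 - ∑ j, u j)

@[simp]
lemma baryCoords_castSucc (u : EuclideanSpace ℝ (Fin d)) (j : Fin d) :
    baryCoords u j.castSucc = u j := by
  simp [baryCoords]

@[simp]
lemma baryCoords_last (u : EuclideanSpace ℝ (Fin d)) :
    baryCoords u (Fin.last d) = 1 - ∑ j, u j := by
  simp [baryCoords]

lemma sum_baryCoords (u : EuclideanSpace ℝ (Fin d)) : ∑ k, baryCoords u k = 1 := by
  simp [Fin.sum_univ_castSucc]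

lemma continuous_baryCoords : Continuous (baryCoords (d := d)) :=
  continuous_pi fun k => Fin.lastCases (by simp only [baryCoords_last]; fun_prop)
    (fun j => by simp only [baryCoords_castSucc]; fun_prop) k

lemma mem_frontier_cornerSimplex_iff {u : EuclideanSpace ℝ (Fin d)} :
    u ∈ frontier (cornerSimplex d) ↔ (∀ k, 0 ≤ baryCoords u k) ∧ ∃ k, baryCoords u k = 0 := by
  rw [frontier_cornerSimplex, Fin.forall_fin_succ', Fin.exists_fin_succ']
  simp only [Set.mem_ofPred_eq, baryCoords_castSucc, baryCoords_last, sub_nonneg, sub_eq_zero,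
    eq_comm (a := (1 : ℝ))]
  tauto

variable {V : Finset α} (e : V ≃ Fin (d + 1))

lemma sum_eq_sum_equiv_symm {M : Type*} [AddCommMonoid M] (x : α → M) :
    ∑ n ∈ V, x n = ∑ k, x (e.symm k) := by
  rw [← sum_coe_sort V x, ← e.symm.sum_comp]

def toCorner (x : α → ℝ) : EuclideanSpace ℝ (Fin d) :=
  WithLp.toLp 2 fun j => x (e.symm j.castSucc)

lemma baryCoords_toCorner {x : α → ℝ} (hx : ∑ n ∈ V, x n = 1) (k : Fin (d + 1)) :
    baryCoords (toCorner e x) k = x (e.symm k) := by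
  rw [sum_eq_sum_equiv_symm e, Fin.sum_univ_castSucc] at hx
  refine Fin.lastCases ?_ (fun j => ?_) k
  · simp only [baryCoords_last, toCorner]
    linarith
  · simp [toCorner]

variable [DecidableEq α]

def ofCorner (u : EuclideanSpace ℝ (Fin d)) (n : α) : ℝ :=
  if h : n ∈ V then baryCoords u (e ⟨n, h⟩) else 0

lemma ofCorner_apply_equiv_symm (u : EuclideanSpace ℝ (Fin d)) (k : Fin (d + 1)) :
    ofCorner e u (e.symm k) = baryCoords u k := by
  simp [ofCorner]

lemma ofCorner_mem_geomReal_Iio {u : EuclideanSpace ℝ (Fin d)}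
    (hu : u ∈ frontier (cornerSimplex d)) : ofCorner e u ∈ geomReal (Set.Iio V) := by
  obtain ⟨hpos, k, hk⟩ := mem_frontier_cornerSimplex_iff.mp hu
  refine mem_geomReal_Iio.mpr ⟨mem_geomReal_Iic.mpr ⟨fun n => ?_, fun n hn => ?_, ?_⟩,
    e.symm k, (e.symm k).2, by rwa [ofCorner_apply_equiv_symm]⟩
  · unfold ofCorner
    split_ifs
    exacts [hpos _, le_rfl]
  · simp [ofCorner, hn]
  · simp only [sum_eq_sum_equiv_symm e, ofCorner_apply_equiv_symm, sum_baryCoords]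

lemma toCorner_mem_frontier {x : α → ℝ} (hx : x ∈ geomReal (Set.Iio V)) :
    toCorner e x ∈ frontier (cornerSimplex d) := by
  obtain ⟨hx, v, hv, hxv⟩ := mem_geomReal_Iio.mp hx
  obtain ⟨hpos, -, hsum⟩ := mem_geomReal_Iic.mp hx
  refine mem_frontier_cornerSimplex_iff.mpr ⟨fun k => ?_, e ⟨v, hv⟩, ?_⟩
  · rw [baryCoords_toCorner e hsum]
    exact hpos _
  · rw [baryCoords_toCorner e hsum, Equiv.symm_apply_apply, hxv]

noncomputable def geomRealIioHomeomorph :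
    geomReal (Set.Iio V) ≃ₜ frontier (cornerSimplex d) where
  toFun x := ⟨toCorner e x, toCorner_mem_frontier e x.2⟩
  invFun u := ⟨ofCorner e u, ofCorner_mem_geomReal_Iio e u.2⟩
  left_inv := by
    rintro ⟨x, hx⟩
    obtain ⟨-, hzero, hsum⟩ := mem_geomReal_Iic.mp (mem_geomReal_Iio.mp hx).1
    ext n
    by_cases hn : n ∈ V
    · have hnk : n = e.symm (e ⟨n, hn⟩) := by simp
      change ofCorner e (toCorner e x) n = x n
      rw [hnk, ofCorner_apply_equiv_symm, baryCoords_toCorner e hsum]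
    · simp [ofCorner, hn, hzero n hn]
  right_inv := by
    rintro ⟨u, hu⟩
    ext j
    simp [toCorner, ofCorner_apply_equiv_symm]
  continuous_toFun := by
    refine Continuous.subtype_mk ((PiLp.continuous_toLp 2 _).comp (continuous_pi fun j => ?_)) _
    exact (continuous_apply _).comp continuous_subtype_val
  continuous_invFun := by
    refine Continuous.subtype_mk (continuous_pi fun n => ?_) _
    unfold ofCorner
    split_ifs
    · exact (continuous_apply _).comp (continuous_baryCoords.comp continuous_subtype_val)
    · exact continuous_const

end BoundaryHomeomorph

noncomputable def geomRealIioHomeomorphSphere [DecidableEq α] {V : Finset α} {d : ℕ}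
    (hV : V.card = d + 1) :
    geomReal (Set.Iio V) ≃ₜ Metric.sphere (0 : EuclideanSpace ℝ (Fin d)) 1 :=
  (geomRealIioHomeomorph (V.equivFinOfCardEq hV)).trans (frontierCornerSimplexHomeomorphSphere d)

section PairComplex

/-- The complex `K_{M-2}` with the vertices in `S` deleted. -/
def pairComplex (M : ℕ) (S : Finset ℕ) : Set (Finset ℕ) :=
  {σ | σ ⊆ Icc 1 M \ S ∧ ∃ i ∈ Icc 1 (M - 1), i ∉ σ ∧ i + 1 ∉ σ}

variable {M : ℕ} {S : Finset ℕ}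

lemma setOf_KFace (t : ℕ) : {σ | KFace t σ} = pairComplex (t + 2) ∅ := by
  ext σ
  simp [KFace, pairComplex]

lemma isLowerSet_pairComplex : IsLowerSet (pairComplex M S) := by
  rintro σ τ hτσ ⟨hσ, i, hi, h₁, h₂⟩
  exact ⟨hτσ.trans hσ, i, hi, fun h => h₁ (hτσ h), fun h => h₂ (hτσ h)⟩

lemma deleteVertex_pairComplex (v : ℕ) :
    deleteVertex (pairComplex M S) v = pairComplex M (insert v S) := by
  ext σ
  simp only [deleteVertex, pairComplex, Set.mem_ofPred_eq, subset_sdiff, disjoint_insert_right]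
  tauto

-- `hright` and `hleft` deal with the pairs `{w, w + 1}` and `{w - 1, w}` through `w`.
lemma dominates_pairComplex {v w : ℕ} (hw : w ∈ Icc 1 M) (hwS : w ∉ S)
    (hright : w = M ∨ w + 1 = v) (hleft : w = 1 ∨ w = v + 1 ∨ (3 ≤ w ∧ w - 2 ∈ S)) :
    Dominates (pairComplex M S) w v := by
  rintro σ ⟨hσ, i, hi, h₁, h₂⟩ hv
  have hS : ∀ n ∈ S, n ∉ σ := fun n hn h => (mem_sdiff.mp (hσ h)).2 hn
  refine ⟨insert_subset (mem_sdiff.mpr ⟨hw, hwS⟩) hσ, ?_⟩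
  have hiv : i ≠ v := fun h => h₁ (h ▸ hv)
  have hiv' : i + 1 ≠ v := fun h => h₂ (h ▸ hv)
  rw [mem_Icc] at hi hw
  by_cases hiw : i + 1 = w
  · -- the free pair `{i, i + 1}` ends at `w`, so `{w - 2, w - 1}` is free instead
    obtain ⟨hw₃, hwS'⟩ := (hleft.resolve_left (by omega)).resolve_left (by omega)
    refine ⟨w - 2, mem_Icc.mpr (by omega), ?_, ?_⟩
    · simp only [mem_insert, not_or]
      exact ⟨by omega, hS _ hwS'⟩
    · rw [show w - 2 + 1 = i by omega]
      simp only [mem_insert, not_or]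
      exact ⟨by omega, h₁⟩
  · refine ⟨i, mem_Icc.mpr hi, ?_, ?_⟩
    · simp only [mem_insert, not_or]
      exact ⟨by omega, h₁⟩
    · simp only [mem_insert, not_or]
      exact ⟨hiw, h₂⟩

lemma pairComplex_eq_Iio (hS : S ⊆ Icc 1 M) (hindep : ∀ i ∈ S, i + 1 ∉ S)
    (hcover : ∀ n ∈ Icc 1 M, n ∉ S → n + 1 ∈ S ∨ (2 ≤ n ∧ n - 1 ∈ S)) :
    pairComplex M S = Set.Iio (Icc 1 M \ S) := by
  ext σ
  simp only [pairComplex, Set.mem_ofPred_eq, Set.mem_Iio]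
  refine ⟨fun ⟨hσ, i, hi, h₁, h₂⟩ => (ssubset_iff_of_subset hσ).mpr ?_,
    fun hσ => ⟨hσ.subset, ?_⟩⟩
  · rw [mem_Icc] at hi
    by_cases hiS : i ∈ S
    · exact ⟨i + 1, mem_sdiff.mpr ⟨mem_Icc.mpr (by omega), hindep i hiS⟩, h₂⟩
    · exact ⟨i, mem_sdiff.mpr ⟨mem_Icc.mpr (by omega), hiS⟩, h₁⟩
  · obtain ⟨n, hn, hnσ⟩ := (ssubset_iff_of_subset hσ.subset).mp hσ
    obtain ⟨hnM, hnS⟩ := mem_sdiff.mp hn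
    have hS' : ∀ n ∈ S, n ∉ σ := fun n hn h => (mem_sdiff.mp (hσ.subset h)).2 hn
    have := mem_Icc.mp hnM
    rcases hcover n hnM hnS with hn₁ | ⟨hn₂, hn₁⟩
    · have := mem_Icc.mp (hS hn₁)
      exact ⟨n, mem_Icc.mpr (by omega), hnσ, hS' _ hn₁⟩
    · exact ⟨n - 1, mem_Icc.mpr (by omega), hS' _ hn₁, by rwa [Nat.sub_add_cancel (by omega)]⟩

lemma pairComplex_eq_Iic (hM : 2 ≤ M) (h₁ : 1 ∈ S) (h₂ : 2 ∈ S) :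
    pairComplex M S = Set.Iic (Icc 1 M \ S) := by
  ext σ
  simp only [pairComplex, Set.mem_ofPred_eq, Set.mem_Iic, and_iff_left_iff_imp]
  intro hσ
  have hS : ∀ n ∈ S, n ∉ σ := fun n hn h => (mem_sdiff.mp (hσ h)).2 hn
  exact ⟨1, mem_Icc.mpr ⟨le_rfl, by omega⟩, hS 1 h₁, hS 2 h₂⟩

def foldedVertices (k : ℕ) : Finset ℕ := (range k).image (3 * · + 2)

lemma mem_foldedVertices {k n : ℕ} : n ∈ foldedVertices k ↔ n < 3 * k ∧ n % 3 = 2 := by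
  simp only [foldedVertices, mem_image, mem_range]
  exact ⟨by rintro ⟨j, hj, rfl⟩; omega, fun h => ⟨n / 3, by omega, by omega⟩⟩

lemma foldedVertices_succ (k : ℕ) :
    foldedVertices (k + 1) = insert (3 * k + 2) (foldedVertices k) := by
  rw [foldedVertices, range_add_one, image_insert, foldedVertices]

lemma card_foldedVertices (k : ℕ) : (foldedVertices k).card = k := by
  rw [foldedVertices, card_image_of_injective _ fun a b h => by omega, card_range]

lemma nonempty_homotopyEquiv_pairComplex_foldedVertices {k : ℕ} (hk : 3 * k ≤ M + 2) :
    Nonempty (geomReal (pairComplex M ∅) ≃ₕ geomReal (pairComplex M (foldedVertices k))) := by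
  induction k with
  | zero => rw [foldedVertices, range_zero, image_empty]; exact ⟨.refl _⟩
  | succ k ih =>
    obtain ⟨e⟩ := ih (by omega)
    have hdom : Dominates (pairComplex M (foldedVertices k)) (3 * k + 1) (3 * k + 2) :=
      dominates_pairComplex (mem_Icc.mpr (by omega)) (by simp only [mem_foldedVertices]; omega)
        (.inr rfl)
        (by simp only [mem_foldedVertices]; omega)
    have e' := foldHomotopyEquiv isLowerSet_pairComplex (by omega) hdom
    rw [deleteVertex_pairComplex, ← foldedVertices_succ] at e'
    exact ⟨e.trans e'⟩

end PairComplex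

lemma nonempty_homotopyEquiv_sphere_of_eq_three_mul (m : ℕ) :
    Nonempty (geomReal {σ | KFace (3 * m) σ} ≃ₕ
      Metric.sphere (0 : EuclideanSpace ℝ (Fin (2 * m))) 1) := by
  obtain ⟨e₁⟩ := nonempty_homotopyEquiv_pairComplex_foldedVertices (M := 3 * m + 2) (k := m)
    (by omega)
  have hdom : Dominates (pairComplex (3 * m + 2) (foldedVertices m)) (3 * m + 2) (3 * m + 1) :=
    dominates_pairComplex (mem_Icc.mpr (by omega))
      (by simp only [mem_foldedVertices]; omega) (.inl rfl) (.inr (.inl rfl))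
  have e₂ := foldHomotopyEquiv isLowerSet_pairComplex (by omega) hdom
  set S := insert (3 * m + 1) (foldedVertices m)
  have hS : S ⊆ Icc 1 (3 * m + 2) := fun n hn => by
    simp only [S, mem_insert, mem_foldedVertices, mem_Icc] at hn ⊢; omega
  have hK : pairComplex (3 * m + 2) S = Set.Iio (Icc 1 (3 * m + 2) \ S) := by
    refine pairComplex_eq_Iio hS (fun i hi => ?_) (fun n hn hnS => ?_) <;>
      simp only [S, mem_insert, mem_foldedVertices, mem_Icc] at * <;> omega
  have hcard : (Icc 1 (3 * m + 2) \ S).card = 2 * m + 1 := by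
    rw [card_sdiff_of_subset hS, Nat.card_Icc, card_insert_of_notMem (by
      simp only [mem_foldedVertices]; omega), card_foldedVertices]
    omega
  rw [deleteVertex_pairComplex, hK] at e₂
  rw [setOf_KFace]
  exact ⟨e₁.trans (e₂.trans (geomRealIioHomeomorphSphere hcard).toHomotopyEquiv)⟩

lemma nonempty_homotopyEquiv_sphere_of_eq_three_mul_add_one (m : ℕ) :
    Nonempty (geomReal {σ | KFace (3 * m + 1) σ} ≃ₕ
      Metric.sphere (0 : EuclideanSpace ℝ (Fin (2 * m + 1))) 1) := by
  obtain ⟨e₁⟩ := nonempty_homotopyEquiv_pairComplex_foldedVertices (M := 3 * m + 3) (k := m + 1)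
    (by omega)
  set S := foldedVertices (m + 1)
  have hS : S ⊆ Icc 1 (3 * m + 3) := fun n hn => by
    simp only [S, mem_foldedVertices, mem_Icc] at hn ⊢; omega
  have hK : pairComplex (3 * m + 3) S = Set.Iio (Icc 1 (3 * m + 3) \ S) := by
    refine pairComplex_eq_Iio hS (fun i hi => ?_) (fun n hn hnS => ?_) <;>
      simp only [S, mem_foldedVertices, mem_Icc] at * <;> omega
  have hcard : (Icc 1 (3 * m + 3) \ S).card = 2 * m + 2 := by
    rw [card_sdiff_of_subset hS, Nat.card_Icc, card_foldedVertices]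
    omega
  rw [hK] at e₁
  rw [setOf_KFace]
  exact ⟨e₁.trans (geomRealIioHomeomorphSphere hcard).toHomotopyEquiv⟩

lemma contractibleSpace_of_eq_three_mul_add_two (m : ℕ) :
    ContractibleSpace (geomReal {σ | KFace (3 * m + 2) σ}) := by
  obtain ⟨e₁⟩ := nonempty_homotopyEquiv_pairComplex_foldedVertices (M := 3 * m + 4) (k := m + 1)
    (by omega)
  have hdom : Dominates (pairComplex (3 * m + 4) (foldedVertices (m + 1))) (3 * m + 4) 1 :=
    dominates_pairComplex (mem_Icc.mpr (by omega)) (by simp only [mem_foldedVertices]; omega)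
      (.inl rfl) (.inr (.inr ⟨by omega, by simp only [mem_foldedVertices]; omega⟩))
  have e₂ := foldHomotopyEquiv isLowerSet_pairComplex (by omega) hdom
  set S := insert 1 (foldedVertices (m + 1))
  have hK : pairComplex (3 * m + 4) S = Set.Iic (Icc 1 (3 * m + 4) \ S) :=
    pairComplex_eq_Iic (by omega) (mem_insert_self _ _)
      (mem_insert_of_mem (mem_foldedVertices.mpr (by omega) : 2 ∈ foldedVertices (m + 1)))
  have hV : (Icc 1 (3 * m + 4) \ S).Nonempty :=
    ⟨3, by simp only [S, mem_sdiff, mem_insert, mem_foldedVertices, mem_Icc]; omega⟩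
  rw [deleteVertex_pairComplex, hK] at e₂
  have := contractibleSpace_geomReal_Iic hV
  rw [setOf_KFace]
  exact (e₁.trans e₂).contractibleSpace

/-- `|K_t|` is homotopy equivalent to `S^{2m-1}` if `t = 3m`, to `S^{2m}` if `t = 3m+1`,
and is contractible if `t = 3m+2`. -/
theorem stmt9 (t m : ℕ) :
    (t = 3 * m → Nonempty (ContinuousMap.HomotopyEquiv
      ↥(geomReal {σ | KFace t σ})
      ↥(Metric.sphere (0 : EuclideanSpace ℝ (Fin (2 * m))) 1))) ∧
    (t = 3 * m + 1 → Nonempty (ContinuousMap.HomotopyEquiv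
      ↥(geomReal {σ | KFace t σ})
      ↥(Metric.sphere (0 : EuclideanSpace ℝ (Fin (2 * m + 1))) 1))) ∧
    (t = 3 * m + 2 → ContractibleSpace ↥(geomReal {σ | KFace t σ})) := by
  refine ⟨?_, ?_, ?_⟩ <;> rintro rfl
  exacts [nonempty_homotopyEquiv_sphere_of_eq_three_mul m,
    nonempty_homotopyEquiv_sphere_of_eq_three_mul_add_one m,
    contractibleSpace_of_eq_three_mul_add_two m]
end

section
/- The reduced Euler characteristic of the complex K_t on {1,...,t+2} (faces are subsets avoiding some pair {i,i+1} entirely) equals −1 if t ≡ 0 (mod 3), +1 if t ≡ 1 (mod 3), and 0 if t ≡ 2 (mod 3). -/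
open Finset

theorem sum_filter_powerset_neg_one_pow_card_eq_sdiff {α : Type*} [DecidableEq α]
    (T : Finset α) (p : Finset α → Prop) [DecidablePred p] :
    ∑ σ ∈ T.powerset with p σ, (-1 : ℤ) ^ #σ =
      (-1) ^ #T * ∑ τ ∈ T.powerset with p (T \ τ), (-1 : ℤ) ^ #τ := by
  rw [mul_sum]
  refine sum_nbij' (T \ ·) (T \ ·) ?_ ?_ ?_ ?_ ?_ <;>
    simp only [mem_filter, mem_powerset, and_imp]
  · exact fun σ hσ hp => ⟨sdiff_subset, by rwa [Finset.sdiff_sdiff_eq_self hσ]⟩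
  · exact fun τ _ hp => ⟨sdiff_subset, hp⟩
  · exact fun σ hσ _ => Finset.sdiff_sdiff_eq_self hσ
  · exact fun τ hτ _ => Finset.sdiff_sdiff_eq_self hτ
  · intro σ hσ _
    rw [← card_sdiff_add_card_eq_card hσ, pow_add, mul_right_comm, ← pow_add,
      Even.neg_one_pow ⟨_, rfl⟩, one_mul]

def NoConsecutive (σ : Finset ℕ) : Prop :=
  ∀ i ∈ σ, i + 1 ∉ σ

instance : DecidablePred NoConsecutive :=
  fun σ => inferInstanceAs (Decidable (∀ i ∈ σ, i + 1 ∉ σ))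

theorem noConsecutive_insert_iff {σ : Finset ℕ} {m : ℕ} (hσ : ∀ j ∈ σ, j + 1 < m) :
    NoConsecutive (insert m σ) ↔ NoConsecutive σ := by
  constructor
  · exact fun h i hi hi1 => h i (mem_insert_of_mem hi) (mem_insert_of_mem hi1)
  · intro h i hi hi1
    rcases mem_insert.mp hi with rfl | hi <;> rcases mem_insert.mp hi1 with hi1 | hi1
    · omega
    · have := hσ _ hi1; omega
    · have := hσ _ hi; omega
    · exact h i hi hi1

theorem not_noConsecutive_insert_succ_insert (σ : Finset ℕ) (m : ℕ) :
    ¬ NoConsecutive (insert (m + 1) (insert m σ)) :=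
  fun h => h m (by simp) (by simp)

def pathIndepNegOne (n : ℕ) : ℤ :=
  ∑ σ ∈ (Icc 1 n).powerset with NoConsecutive σ, (-1) ^ #σ

theorem pathIndepNegOne_add_two (n : ℕ) :
    pathIndepNegOne (n + 2) = pathIndepNegOne (n + 1) - pathIndepNegOne n := by
  set g : Finset ℕ → ℤ := fun σ => if NoConsecutive σ then (-1) ^ #σ else 0
  have hg (m : ℕ) : pathIndepNegOne m = ∑ σ ∈ (Icc 1 m).powerset, g σ := sum_filter _ _
  have hIcc (m : ℕ) : Icc 1 (m + 1) = insert (m + 1) (Icc 1 m) :=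
    (insert_Icc_right_eq_Icc_add_one (by omega)).symm
  have hg_insert (σ : Finset ℕ) (hσ : σ ∈ (Icc 1 n).powerset) : g (insert (n + 2) σ) = -g σ := by
    have hlt : ∀ j ∈ σ, j + 1 < n + 2 := fun j hj => by
      have := (mem_Icc.mp (mem_powerset.mp hσ hj)).2; omega
    have hnot : n + 2 ∉ σ := fun h => by have := hlt _ h; omega
    simp only [g, noConsecutive_insert_iff hlt, card_insert_of_notMem hnot, pow_succ]
    split_ifs <;> simp
  have hg_pair (σ : Finset ℕ) : g (insert (n + 2) (insert (n + 1) σ)) = 0 :=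
    if_neg (not_noConsecutive_insert_succ_insert σ (n + 1))
  rw [hg, hg, hg, hIcc (n + 1), sum_powerset_insert (by simp), sub_eq_add_neg, ← sum_neg_distrib]
  congr 1
  rw [hIcc n, sum_powerset_insert (by simp)]
  simp only [hg_pair, sum_const_zero, add_zero]
  exact sum_congr rfl hg_insert

theorem pathIndepNegOne_add_three (n : ℕ) :
    pathIndepNegOne (n + 3) = -pathIndepNegOne n := by
  rw [pathIndepNegOne_add_two, pathIndepNegOne_add_two]
  ring

theorem neg_one_pow_mul_pathIndepNegOne (t : ℕ) :
    (-1) ^ t * pathIndepNegOne (t + 2) = if t % 3 = 0 then -1 else if t % 3 = 1 then 1 else 0 := by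
  induction t using Nat.strong_induction_on with
  | _ t ih =>
    match t with
    | 0 | 1 | 2 =>
      have h0 : pathIndepNegOne 0 = 1 := by decide
      have h1 : pathIndepNegOne 1 = 0 := by decide
      simp [pathIndepNegOne_add_two, h0, h1]
    | t + 3 =>
      rw [pathIndepNegOne_add_three, Nat.add_mod_right, ← ih t (by omega)]
      ring

theorem kFace_sdiff_iff {t : ℕ} {τ : Finset ℕ} (hτ : τ ⊆ Icc 1 (t + 2)) :
    KFace t (Icc 1 (t + 2) \ τ) ↔ ¬ NoConsecutive τ := by
  constructor
  · rintro ⟨-, i, hi, hiτ, hi1τ⟩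
    simp only [mem_sdiff, mem_Icc, not_and, not_not] at hi hiτ hi1τ
    exact fun h => h i (hiτ (by omega)) (hi1τ (by omega))
  · intro h
    simp only [NoConsecutive, not_forall, not_not] at h
    obtain ⟨i, hi, hi1⟩ := h
    have := mem_Icc.mp (hτ hi1)
    exact ⟨sdiff_subset, i, mem_Icc.mpr ⟨(mem_Icc.mp (hτ hi)).1, by omega⟩,
      fun h => (mem_sdiff.mp h).2 hi, fun h => (mem_sdiff.mp h).2 hi1⟩

open Classical in
/-- The reduced Euler characteristic `χ̃ = ∑_{faces σ, incl. ∅} (-1)^{|σ|-1}` of `K_t`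
equals `-1, +1, 0` according to `t ≡ 0, 1, 2 (mod 3)`. -/
theorem stmt10 (t : ℕ) :
    -(∑ σ ∈ (Finset.Icc 1 (t + 2)).powerset.filter (fun σ => KFace t σ),
        (-1 : ℤ) ^ σ.card) =
      if t % 3 = 0 then -1 else if t % 3 = 1 then 1 else 0 := by
  have hsplit := sum_filter_add_sum_filter_not (Icc 1 (t + 2)).powerset (KFace t)
    (fun σ => (-1 : ℤ) ^ #σ)
  rw [sum_powerset_neg_one_pow_card_of_nonempty ⟨1, by simp⟩] at hsplit
  have hnonfaces : ∑ σ ∈ (Icc 1 (t + 2)).powerset with ¬ KFace t σ, (-1 : ℤ) ^ #σ =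
      (-1) ^ t * pathIndepNegOne (t + 2) := by
    rw [sum_filter_powerset_neg_one_pow_card_eq_sdiff, Nat.card_Icc, pathIndepNegOne]
    congr 1
    · simp [pow_add]
    · exact sum_congr (filter_congr fun τ hτ => by
        rw [kFace_sdiff_iff (mem_powerset.mp hτ), not_not]) fun _ _ => rfl
  rw [← neg_one_pow_mul_pathIndepNegOne, ← hnonfaces]
  linarith
end

section
/- If T is a string (path) with t vertices and t ≥ k−1, then the k-fold disconnecting complex D_k(T) is isomorphic to the complex δ_{(k+1, 1^{t+2−k})}; concretely, D_k(T) is the complex on the t+2 vertices of T̂ whose faces are the subsets σ such that some k consecutive vertices of the path T̂ all avoid σ. -/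
/-! A path of `T̂` between distinct leaves is the whole vertex list `[1, ..., m]`, read in one
direction or the other (a path that ever stepped back would revisit a vertex), so the faces of `D_k` are the sets avoiding some run of `k` consecutive
vertices of `[1, ..., m]`, i.e. some window `{i, ..., i + k - 1} ⊆ {1, ..., m}`. -/

/-- A leaf of a graph: a vertex with exactly one neighbour. -/
def IsLeaf {α : Type*} (G : SimpleGraph α) (v : α) : Prop := ∃! w, G.Adj v w

/-- The path graph `T̂` on the vertices `{1,...,m}` (as a subgraph of ℕ). -/
def pathGraph (m : ℕ) : SimpleGraph ℕ :=
  SimpleGraph.fromRel fun a b => b = a + 1 ∧ 1 ≤ a ∧ b ≤ m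

section Runs

variable {α : Type*} {σ : Finset α} {k : ℕ} {l : List α}

def HasAvoidingRun (σ : Finset α) (k : ℕ) (l : List α) : Prop :=
  ∃ bl, bl <:+: l ∧ bl.length = k ∧ ∀ x ∈ bl, x ∉ σ

theorem hasAvoidingRun_iff_exists_append :
    HasAvoidingRun σ k l ↔
      ∃ l₁ bl l₂, l = l₁ ++ bl ++ l₂ ∧ bl.length = k ∧ ∀ x ∈ bl, x ∉ σ :=
  ⟨fun ⟨bl, ⟨l₁, l₂, h⟩, hbl⟩ => ⟨l₁, bl, l₂, h.symm, hbl⟩,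
    fun ⟨l₁, bl, l₂, h, hbl⟩ => ⟨bl, ⟨l₁, l₂, h.symm⟩, hbl⟩⟩

theorem HasAvoidingRun.reverse (h : HasAvoidingRun σ k l) : HasAvoidingRun σ k l.reverse :=
  let ⟨bl, hbl, hlen, hσ⟩ := h
  ⟨bl.reverse, List.reverse_infix.mpr hbl, by simpa using hlen, by simpa using hσ⟩

theorem hasAvoidingRun_reverse :
    HasAvoidingRun σ k l.reverse ↔ HasAvoidingRun σ k l :=
  ⟨fun h => by simpa using h.reverse, HasAvoidingRun.reverse⟩

end Runs

theorem hasAvoidingRun_range'_iff {σ : Finset ℕ} {k s n : ℕ} :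
    HasAvoidingRun σ k (List.range' s n) ↔
      ∃ i, s ≤ i ∧ i + k ≤ s + n ∧ ∀ j ∈ Finset.Ico i (i + k), j ∉ σ := by
  simp only [hasAvoidingRun_iff_exists_append, Finset.mem_Ico]
  constructor
  · rintro ⟨l₁, bl, l₂, h, rfl, hσ⟩
    obtain ⟨a, ha, -, hrest⟩ := List.range'_eq_append_iff.mp (h.trans (List.append_assoc ..))
    obtain ⟨b, hb, rfl, -⟩ := List.range'_eq_append_iff.mp hrest.symm
    simp only [List.mem_range'_1] at hσ
    simp only [List.length_range']
    exact ⟨s + a, by omega, by omega, fun j hj => hσ j (by omega)⟩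
  · rintro ⟨i, hsi, hin, hσ⟩
    obtain ⟨d, rfl⟩ := Nat.exists_eq_add_of_le hsi
    obtain ⟨e, rfl⟩ := Nat.exists_eq_add_of_le (show d + k ≤ n by omega)
    refine ⟨List.range' s d, List.range' (s + d) k, List.range' (s + d + k) e, ?_,
      List.length_range', fun j hj => hσ j (List.mem_range'_1.mp hj)⟩
    rw [List.range'_append_1, Nat.add_assoc s d k, List.range'_append_1]

section PathGraph

variable {m : ℕ}

theorem pathGraph_adj {a b : ℕ} :
    (pathGraph m).Adj a b ↔
      (b = a + 1 ∧ 1 ≤ a ∧ b ≤ m) ∨ (a = b + 1 ∧ 1 ≤ b ∧ a ≤ m) := by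
  simp only [pathGraph, SimpleGraph.fromRel_adj, and_iff_right_iff_imp]
  omega

theorem isLeaf_pathGraph_iff (hm : 2 ≤ m) {v : ℕ} :
    IsLeaf (pathGraph m) v ↔ v = 1 ∨ v = m := by
  simp only [IsLeaf, pathGraph_adj]
  constructor
  · rintro ⟨w, hw, huniq⟩
    have := huniq (v + 1)
    have := huniq (v - 1)
    omega
  · rintro (rfl | rfl)
    · exact ⟨2, by omega, fun w hw => by omega⟩
    · exact ⟨v - 1, by omega, fun w hw => by omega⟩

theorem pathGraph_reachable {a b : ℕ} (ha : 1 ≤ a) (hab : a ≤ b) (hb : b ≤ m) :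
    (pathGraph m).Reachable a b := by
  induction b, hab using Nat.le_induction with
  | base => rfl
  | succ b _ ih =>
    exact (ih (by omega)).trans (pathGraph_adj.mpr (.inl ⟨rfl, by omega, hb⟩)).reachable

theorem support_eq_range'_of_isPath {a b : ℕ} (p : (pathGraph m).Walk a b) (hp : p.IsPath)
    (hab : a ≤ b) : p.support = List.range' a (b + 1 - a) := by
  induction p with
  | nil => simp
  | @cons a c b h q ih =>
    obtain ⟨hq, ha⟩ := SimpleGraph.Walk.cons_isPath_iff h q |>.mp hp
    have hne : a ≠ b := fun e => ha (e ▸ q.end_mem_support)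
    rcases pathGraph_adj.mp h with ⟨rfl, -, -⟩ | ⟨rfl, -, -⟩
    · rw [SimpleGraph.Walk.support_cons, ih hq (by omega),
        show b + 1 - a = b + 1 - (a + 1) + 1 by omega]
      rfl
    · refine absurd ?_ ha
      rw [ih hq (by omega), List.mem_range'_1]
      omega

theorem support_eq_range'_or_reverse_of_isLeaf (hm : 2 ≤ m) {a b : ℕ}
    (ha : IsLeaf (pathGraph m) a) (hb : IsLeaf (pathGraph m) b) (hab : a ≠ b)
    (p : (pathGraph m).Walk a b) (hp : p.IsPath) :
    p.support = List.range' 1 m ∨ p.support = (List.range' 1 m).reverse := by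
  have hsupp {q : (pathGraph m).Walk 1 m} (hq : q.IsPath) : q.support = List.range' 1 m := by
    rw [support_eq_range'_of_isPath q hq (by omega), Nat.add_sub_cancel]
  rw [isLeaf_pathGraph_iff hm] at ha hb
  rcases ha with rfl | rfl <;> rcases hb with rfl | rfl
  · exact absurd rfl hab
  · exact .inl (hsupp hp)
  · rw [← hsupp hp.reverse, SimpleGraph.Walk.support_reverse, List.reverse_reverse]
    exact .inr rfl
  · exact absurd rfl hab

theorem forall_isLeaf_hasAvoidingRun_iff (hm : 2 ≤ m) {σ : Finset ℕ} {k : ℕ} :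
    (∀ a b : ℕ, IsLeaf (pathGraph m) a → IsLeaf (pathGraph m) b → a ≠ b →
      ∀ p : (pathGraph m).Walk a b, p.IsPath → HasAvoidingRun σ k p.support) ↔
    HasAvoidingRun σ k (List.range' 1 m) := by
  constructor
  · intro H
    obtain ⟨p, hp⟩ := (pathGraph_reachable (b := m) le_rfl (by omega) le_rfl).exists_isPath
    have h := H 1 m ((isLeaf_pathGraph_iff hm).mpr (.inl rfl))
      ((isLeaf_pathGraph_iff hm).mpr (.inr rfl)) (by omega) p hp
    rwa [support_eq_range'_of_isPath p hp (by omega), Nat.add_sub_cancel] at h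
  · intro h a b ha hb hab p hp
    rcases support_eq_range'_or_reverse_of_isLeaf hm ha hb hab p hp with e | e <;> rw [e]
    · exact h
    · exact hasAvoidingRun_reverse.mpr h

end PathGraph

theorem stmt15_general (t k : ℕ) (σ : Finset ℕ) :
    (∀ a b : ℕ, IsLeaf (pathGraph (t + 2)) a → IsLeaf (pathGraph (t + 2)) b → a ≠ b →
      ∀ p : (pathGraph (t + 2)).Walk a b, p.IsPath →
        ∃ l₁ bl l₂, p.support = l₁ ++ bl ++ l₂ ∧ bl.length = k ∧ ∀ x ∈ bl, x ∉ σ) ↔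
    ∃ i ∈ Finset.Icc 1 (t + 3 - k), ∀ j ∈ Finset.Ico i (i + k), j ∉ σ := by
  simp only [← hasAvoidingRun_iff_exists_append]
  rw [forall_isLeaf_hasAvoidingRun_iff (by omega), hasAvoidingRun_range'_iff]
  simp only [Finset.mem_Icc]
  exact ⟨fun ⟨i, hi, hik, h⟩ => ⟨i, ⟨hi, by omega⟩, h⟩,
    fun ⟨i, ⟨hi, _⟩, h⟩ => ⟨i, hi, by omega, h⟩⟩

/-- For a string `T` with `t` vertices and `t ≥ k - 1`, the `k`-fold disconnecting complex
`D_k(T)` (on the `t+2` vertices of `T̂`, a path) is the complex `δ_{(k+1,1^{t+2-k})}`: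
`σ` is a face iff some `k` consecutive vertices `{i,...,i+k-1}`, `1 ≤ i ≤ t-k+3`, all
avoid `σ`. -/
theorem stmt15 (t k : ℕ) (hk : 0 < k) (ht : k - 1 ≤ t) (σ : Finset ℕ)
    (hσ : σ ⊆ Finset.Icc 1 (t + 2)) :
    (∀ a b : ℕ, IsLeaf (pathGraph (t + 2)) a → IsLeaf (pathGraph (t + 2)) b → a ≠ b →
      ∀ p : (pathGraph (t + 2)).Walk a b, p.IsPath →
        ∃ l₁ bl l₂, p.support = l₁ ++ bl ++ l₂ ∧ bl.length = k ∧ ∀ x ∈ bl, x ∉ σ) ↔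
    ∃ i ∈ Finset.Icc 1 (t + 3 - k), ∀ j ∈ Finset.Ico i (i + k), j ∉ σ :=
  stmt15_general t k σ
end
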